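/- arXiv:2210.15204 — 7 statements merged into one kernel-verified Lean document; each statement's English description precedes it below -/
import Mathlib

section
/- There exists a universal constant M₀ > 0 (independent of the channel and of a, b) such that for any a < b and any vector field v = (v₁,v₂) ∈ C¹ on the closure of Ω_{a,b} having zero flux (i.e. ∫_{f₁(x₁)}^{f₂(x₁)} v₁(x₁,x₂) dx₂ = 0 for every x₁ ∈ (a,b)), one has ∫_{Ω_{a,b}} |v₁(x)/f(x₁)|² dx ≤ M₀² ∫_{Ω_{a,b}} |∂_{x₂} v₁(x)|² dx. -/
/-!
On a vertical slice `x₁ = const` of the channel, of width `L = f₂ x₁ - f₁ x₁ ≥ d`, the zero-flux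
condition and the mean value theorem for integrals give a zero of `v₁(x₁, ·)`. From it the
fundamental theorem of calculus and Cauchy–Schwarz bound `v₁(x₁, ·)²` pointwise by
`L ∫ (∂₂v₁)²`, so `∫ (v₁ / L)² ≤ ∫ (∂₂v₁)²` on the slice, and Fubini integrates this over `x₁`:
`M₀ = 1` works. Being `C¹` on the compact closure of `Ω_{a,b}`, `v₁` and `∂₂v₁` are bounded there,
which makes both sides genuine integrals rather than the junk value `0`.
-/

open MeasureTheory Set

/-- The channel piece `Ω_{a,b} = {x ∈ Ω : a < x₁ < b}` where
`Ω = {(x₁,x₂) : f₁(x₁) < x₂ < f₂(x₁)}`. -/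
def chan (f₁ f₂ : ℝ → ℝ) (a b : ℝ) : Set (ℝ × ℝ) :=
  {x : ℝ × ℝ | a < x.1 ∧ x.1 < b ∧ f₁ x.1 < x.2 ∧ x.2 < f₂ x.1}

open Filter Topology

section DerivativeBound

variable {𝕜 E F : Type*} [NontriviallyNormedField 𝕜] [NormedAddCommGroup E] [NormedSpace 𝕜 E]
  [NormedAddCommGroup F] [NormedSpace 𝕜 F] {v : E → F} {s U : Set E}

theorem ContDiffWithinAt.exists_nhdsWithin_bound_fderiv {x : E}
    (hv : ContDiffWithinAt 𝕜 1 v s x) (hx : x ∈ s) (hU : IsOpen U) (hUs : U ⊆ s) :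
    ∃ t ∈ 𝓝[s] x, ∃ K, ∀ y ∈ t ∩ U, ‖fderiv 𝕜 v y‖ ≤ K := by
  rw [← zero_add 1, contDiffWithinAt_succ_iff_hasFDerivWithinAt (by simp), insert_eq_of_mem hx]
    at hv
  obtain ⟨u, hu, -, v', hv', hcont⟩ := hv
  obtain ⟨w, hw, hxw, hwu⟩ := mem_nhdsWithin.mp hu
  have hbound : ∀ᶠ y in 𝓝[s] x, ‖v' y‖ < ‖v' x‖ + 1 :=
    nhdsWithin_le_of_mem hu <| (hcont.continuousWithinAt.norm).eventually_lt_const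
      (lt_add_one _)
  refine ⟨w ∩ {y | ‖v' y‖ < ‖v' x‖ + 1}, inter_mem (mem_nhdsWithin_of_mem_nhds
    (hw.mem_nhds hxw)) hbound, ‖v' x‖ + 1, ?_⟩
  rintro y ⟨⟨hyw, hy⟩, hyU⟩
  -- `v'` is only a derivative within `u`; it is the true `fderiv` at points of the open `U`.
  have hu_nhds : u ∈ 𝓝 y :=
    mem_of_superset ((hw.inter hU).mem_nhds ⟨hyw, hyU⟩) fun z hz => hwu ⟨hz.1, hUs hz.2⟩
  rw [((hv' y (mem_of_mem_nhds hu_nhds)).hasFDerivAt hu_nhds).fderiv]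
  exact hy.le

theorem ContDiffOn.exists_bound_fderiv (hv : ContDiffOn 𝕜 1 v s) (hs : IsCompact s)
    (hU : IsOpen U) (hUs : U ⊆ s) :
    ∃ K, ∀ x ∈ U, ‖fderiv 𝕜 v x‖ ≤ K := by
  suffices h : ∃ K, ∀ x ∈ s ∩ U, ‖fderiv 𝕜 v x‖ ≤ K by
    obtain ⟨K, hK⟩ := h
    exact ⟨K, fun x hx => hK x ⟨hUs hx, hx⟩⟩
  refine hs.induction_on (p := fun t => ∃ K, ∀ x ∈ t ∩ U, ‖fderiv 𝕜 v x‖ ≤ K)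
    ⟨0, by simp⟩ ?_ ?_ ?_
  · rintro t₁ t₂ h ⟨K, hK⟩
    exact ⟨K, fun x hx => hK x ⟨h hx.1, hx.2⟩⟩
  · rintro t₁ t₂ ⟨K₁, hK₁⟩ ⟨K₂, hK₂⟩
    refine ⟨max K₁ K₂, fun x hx => ?_⟩
    rcases hx with ⟨hx₁ | hx₂, hxU⟩
    · exact (hK₁ x ⟨hx₁, hxU⟩).trans (le_max_left _ _)
    · exact (hK₂ x ⟨hx₂, hxU⟩).trans (le_max_right _ _)
  · intro x hx
    exact (hv x hx).exists_nhdsWithin_bound_fderiv hx hU hUs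

end DerivativeBound

theorem sq_integral_le_measureReal_mul_integral_sq {α : Type*} [MeasurableSpace α]
    {μ : Measure α} [IsFiniteMeasure μ] {f : α → ℝ} (hf : MemLp f 2 μ) :
    (∫ x, f x ∂μ) ^ 2 ≤ μ.real univ * ∫ x, f x ^ 2 ∂μ := by
  set L := μ.real univ
  set I := ∫ x, f x ∂μ
  have hfi : Integrable f μ := hf.integrable one_le_two
  have hexpand : ∫ x, (L * f x - I) ^ 2 ∂μ = L * (L * ∫ x, f x ^ 2 ∂μ - I ^ 2) := by
    have h : ∀ x, (L * f x - I) ^ 2 = L ^ 2 * f x ^ 2 - 2 * L * I * f x + I ^ 2 := fun x => by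
      ring
    have hint : Integrable (fun x => L ^ 2 * f x ^ 2 - 2 * L * I * f x) μ :=
      (hf.integrable_sq.const_mul _).sub (hfi.const_mul _)
    simp only [h]
    rw [integral_add hint (integrable_const _),
      integral_sub (hf.integrable_sq.const_mul _) (hfi.const_mul _), integral_const_mul,
      integral_const_mul, integral_const, smul_eq_mul]
    ring
  have hnonneg : 0 ≤ L * (L * ∫ x, f x ^ 2 ∂μ - I ^ 2) :=
    hexpand ▸ integral_nonneg fun x => sq_nonneg _
  rcases (measureReal_nonneg : 0 ≤ L).eq_or_lt with hL | hL
  · have hμ : μ = 0 := Measure.measure_univ_eq_zero.mp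
      ((measureReal_eq_zero_iff (measure_ne_top μ univ)).mp hL.symm)
    simp [I, hμ]
  · nlinarith

theorem exists_mem_Ioo_eq_zero_of_intervalIntegral_eq_zero {u : ℝ → ℝ} {c e : ℝ} (hce : c < e)
    (hu : ContinuousOn u (Icc c e)) (hmean : ∫ t in c..e, u t = 0) :
    ∃ t ∈ Ioo c e, u t = 0 := by
  obtain ⟨t, ht, hut⟩ := exists_eq_interval_average hce.ne (uIcc_of_le hce.le ▸ hu)
  refine ⟨t, uIoo_of_le hce.le ▸ ht, ?_⟩
  rw [hut, interval_average_eq_div, hmean, zero_div]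

theorem abs_sub_le_setIntegral_abs_of_hasDerivAt {u g : ℝ → ℝ} {c e : ℝ}
    (hu : ContinuousOn u (Icc c e)) (hder : ∀ t ∈ Ioo c e, HasDerivAt u (g t) t)
    (hg : IntegrableOn g (Ioo c e)) {s t : ℝ} (hs : s ∈ Icc c e) (ht : t ∈ Icc c e) :
    |u t - u s| ≤ ∫ x in Ioo c e, |g x| := by
  wlog hst : s ≤ t generalizing s t
  · rw [abs_sub_comm]; exact this ht hs (le_of_not_ge hst)
  have hsub : Icc s t ⊆ Icc c e := Icc_subset_Icc hs.1 ht.2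
  have hftc : ∫ x in s..t, g x = u t - u s :=
    intervalIntegral.integral_eq_sub_of_hasDerivAt_of_le hst (hu.mono hsub)
      (fun x hx => hder x (Ioo_subset_Ioo hs.1 ht.2 hx))
      ((intervalIntegrable_iff_integrableOn_Ioo_of_le hst).mpr
        (hg.mono_set (Ioo_subset_Ioo hs.1 ht.2)))
  calc |u t - u s| = |∫ x in s..t, g x| := by rw [hftc]
    _ ≤ ∫ x in s..t, |g x| := intervalIntegral.abs_integral_le_integral_abs hst
    _ = ∫ x in Ioo s t, |g x| := by
      rw [intervalIntegral.integral_of_le hst, integral_Ioc_eq_integral_Ioo]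
    _ ≤ ∫ x in Ioo c e, |g x| :=
      setIntegral_mono_set hg.abs (Eventually.of_forall fun _ => abs_nonneg _)
        (Ioo_subset_Ioo hs.1 ht.2).eventuallyLE

theorem integral_sq_div_le_integral_sq_of_hasDerivAt {u g : ℝ → ℝ} {c e : ℝ} (hce : c < e)
    (hu : ContinuousOn u (Icc c e)) (hder : ∀ t ∈ Ioo c e, HasDerivAt u (g t) t)
    (hg : MemLp g 2 (volume.restrict (Ioo c e))) (hmean : ∫ t in c..e, u t = 0) :
    ∫ t in Ioo c e, (u t / (e - c)) ^ 2 ≤ ∫ t in Ioo c e, g t ^ 2 := by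
  have hL : 0 < e - c := sub_pos.mpr hce
  have hvol : (volume.restrict (Ioo c e)).real univ = e - c := by
    rw [measureReal_restrict_apply_univ, Real.volume_real_Ioo_of_le hce.le]
  have : IsFiniteMeasure (volume.restrict (Ioo c e)) :=
    isFiniteMeasure_restrict.mpr measure_Ioo_lt_top.ne
  set A := ∫ x in Ioo c e, |g x|
  obtain ⟨t₀, ht₀, hut₀⟩ := exists_mem_Ioo_eq_zero_of_intervalIntegral_eq_zero hce hu hmean
  have hA : A ^ 2 ≤ (e - c) * ∫ t in Ioo c e, g t ^ 2 := by
    simpa only [hvol, Real.norm_eq_abs, sq_abs] using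
      sq_integral_le_measureReal_mul_integral_sq hg.norm
  have hpt : ∀ t ∈ Ioo c e, ‖(u t / (e - c)) ^ 2‖ ≤ A ^ 2 / (e - c) ^ 2 := by
    intro t ht
    have h := abs_sub_le_setIntegral_abs_of_hasDerivAt hu hder (hg.integrable one_le_two)
      (Ioo_subset_Icc_self ht₀) (Ioo_subset_Icc_self ht)
    rw [hut₀, sub_zero] at h
    rw [Real.norm_eq_abs, abs_pow, abs_div, abs_of_pos hL, div_pow]
    gcongr
  calc ∫ t in Ioo c e, (u t / (e - c)) ^ 2
      ≤ A ^ 2 / (e - c) ^ 2 * (e - c) :=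
        le_of_abs_le ((norm_setIntegral_le_of_norm_le_const measure_Ioo_lt_top hpt).trans_eq
          (by rw [Real.volume_real_Ioo_of_le hce.le]))
    _ = A ^ 2 / (e - c) := by field_simp
    _ ≤ ∫ t in Ioo c e, g t ^ 2 := by rwa [div_le_iff₀' hL]

section Channel

variable {f₁ f₂ : ℝ → ℝ} {a b : ℝ}

theorem measurableSet_chan (hf₁ : Measurable f₁) (hf₂ : Measurable f₂) :
    MeasurableSet (chan f₁ f₂ a b) :=
  (measurableSet_lt measurable_const measurable_fst).inter
    ((measurableSet_lt measurable_fst measurable_const).inter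
      ((measurableSet_lt (hf₁.comp measurable_fst) measurable_snd).inter
        (measurableSet_lt measurable_snd (hf₂.comp measurable_fst))))

theorem isOpen_chan (hf₁ : Continuous f₁) (hf₂ : Continuous f₂) : IsOpen (chan f₁ f₂ a b) :=
  (isOpen_lt continuous_const continuous_fst).inter
    ((isOpen_lt continuous_fst continuous_const).inter
      ((isOpen_lt (hf₁.comp continuous_fst) continuous_snd).inter
        (isOpen_lt continuous_snd (hf₂.comp continuous_fst))))

theorem isCompact_closure_chan (hf₁ : Continuous f₁) (hf₂ : Continuous f₂) :
    IsCompact (closure (chan f₁ f₂ a b)) := by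
  obtain ⟨m, hm⟩ := (isCompact_Icc (a := a) (b := b)).bddBelow_image hf₁.continuousOn
  obtain ⟨M, hM⟩ := (isCompact_Icc (a := a) (b := b)).bddAbove_image hf₂.continuousOn
  refine ((isCompact_Icc (a := a) (b := b)).prod (isCompact_Icc (a := m) (b := M)))
    |>.of_isClosed_subset isClosed_closure (closure_minimal ?_ (isClosed_Icc.prod isClosed_Icc))
  rintro ⟨x₁, x₂⟩ ⟨h₁, h₂, h₃, h₄⟩
  have hx₁ : x₁ ∈ Icc a b := ⟨h₁.le, h₂.le⟩
  exact ⟨hx₁, (hm (mem_image_of_mem _ hx₁)).trans h₃.le,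
    h₄.le.trans (hM (mem_image_of_mem _ hx₁))⟩

theorem mk_mem_closure_chan {x₁ x₂ : ℝ} (hx₁ : x₁ ∈ Ioo a b) (hf : f₁ x₁ < f₂ x₁)
    (hx₂ : x₂ ∈ Icc (f₁ x₁) (f₂ x₁)) : (x₁, x₂) ∈ closure (chan f₁ f₂ a b) := by
  have hslice : {x₁} ×ˢ Ioo (f₁ x₁) (f₂ x₁) ⊆ chan f₁ f₂ a b := by
    rintro ⟨y₁, y₂⟩ ⟨rfl, hy₂⟩
    exact ⟨hx₁.1, hx₁.2, hy₂.1, hy₂.2⟩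
  refine closure_mono hslice ?_
  rw [closure_prod_eq, closure_singleton, closure_Ioo hf.ne]
  exact ⟨rfl, hx₂⟩

theorem integral_indicator_chan_slice (h : ℝ × ℝ → ℝ) (x₁ : ℝ) :
    ∫ x₂, (chan f₁ f₂ a b).indicator h (x₁, x₂) =
      (Ioo a b).indicator (fun x₁ => ∫ x₂ in Ioo (f₁ x₁) (f₂ x₁), h (x₁, x₂)) x₁ := by
  by_cases hx₁ : x₁ ∈ Ioo a b
  · rw [indicator_of_mem hx₁, ← integral_indicator measurableSet_Ioo]
    congr 1 with x₂
    simp only [indicator, chan, mem_ofPred_eq, mem_Ioo, hx₁.1, hx₁.2, true_and]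
  · rw [indicator_of_notMem hx₁, ← integral_zero ℝ ℝ]
    congr 1 with x₂
    exact indicator_of_notMem (fun hx => hx₁ ⟨hx.1, hx.2.1⟩) h

theorem integrable_indicator_chan (hf₁ : Measurable f₁) (hf₂ : Measurable f₂)
    {h : ℝ × ℝ → ℝ} (hh : IntegrableOn h (chan f₁ f₂ a b)) :
    Integrable ((chan f₁ f₂ a b).indicator h) (volume.prod volume) := by
  rw [← Measure.volume_eq_prod]
  exact (integrable_indicator_iff (measurableSet_chan hf₁ hf₂)).mpr hh

theorem setIntegral_chan_eq_integral_integral (hf₁ : Measurable f₁) (hf₂ : Measurable f₂)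
    {h : ℝ × ℝ → ℝ} (hh : IntegrableOn h (chan f₁ f₂ a b)) :
    ∫ x in chan f₁ f₂ a b, h x = ∫ x₁ in Ioo a b, ∫ x₂ in Ioo (f₁ x₁) (f₂ x₁), h (x₁, x₂) := by
  rw [← integral_indicator (measurableSet_chan hf₁ hf₂), Measure.volume_eq_prod,
    integral_prod _ (integrable_indicator_chan hf₁ hf₂ hh)]
  simp only [integral_indicator_chan_slice]
  exact integral_indicator measurableSet_Ioo

theorem integrableOn_setIntegral_slice_chan (hf₁ : Measurable f₁) (hf₂ : Measurable f₂)
    {h : ℝ × ℝ → ℝ} (hh : IntegrableOn h (chan f₁ f₂ a b)) :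
    IntegrableOn (fun x₁ => ∫ x₂ in Ioo (f₁ x₁) (f₂ x₁), h (x₁, x₂)) (Ioo a b) := by
  have := (integrable_indicator_chan hf₁ hf₂ hh).integral_prod_left
  simp only [integral_indicator_chan_slice] at this
  exact (integrable_indicator_iff measurableSet_Ioo).mp this

theorem setIntegral_chan_mono_of_slice (hf₁ : Measurable f₁) (hf₂ : Measurable f₂)
    {l r : ℝ × ℝ → ℝ} (hl : IntegrableOn l (chan f₁ f₂ a b))
    (hr : IntegrableOn r (chan f₁ f₂ a b))
    (hslice : ∀ x₁ ∈ Ioo a b,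
      ∫ x₂ in Ioo (f₁ x₁) (f₂ x₁), l (x₁, x₂) ≤ ∫ x₂ in Ioo (f₁ x₁) (f₂ x₁), r (x₁, x₂)) :
    ∫ x in chan f₁ f₂ a b, l x ≤ ∫ x in chan f₁ f₂ a b, r x := by
  rw [setIntegral_chan_eq_integral_integral hf₁ hf₂ hl,
    setIntegral_chan_eq_integral_integral hf₁ hf₂ hr]
  exact setIntegral_mono_on (integrableOn_setIntegral_slice_chan hf₁ hf₂ hl)
    (integrableOn_setIntegral_slice_chan hf₁ hf₂ hr) measurableSet_Ioo hslice

theorem integral_slice_sq_div_le_integral_slice_sq_fderiv (hf₁ : Continuous f₁)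
    (hf₂ : Continuous f₂) {v : ℝ × ℝ → ℝ} (hv : ContDiffOn ℝ 1 v (closure (chan f₁ f₂ a b)))
    {K : ℝ} (hK : ∀ x ∈ chan f₁ f₂ a b, |fderiv ℝ v x (0, 1)| ≤ K) {x₁ : ℝ}
    (hx₁ : x₁ ∈ Ioo a b) (hf : f₁ x₁ < f₂ x₁)
    (hflux : ∫ x₂ in (f₁ x₁)..(f₂ x₁), v (x₁, x₂) = 0) :
    ∫ x₂ in Ioo (f₁ x₁) (f₂ x₁), (v (x₁, x₂) / (f₂ x₁ - f₁ x₁)) ^ 2 ≤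
      ∫ x₂ in Ioo (f₁ x₁) (f₂ x₁), fderiv ℝ v (x₁, x₂) (0, 1) ^ 2 := by
  have hmem : ∀ x₂ ∈ Ioo (f₁ x₁) (f₂ x₁), (x₁, x₂) ∈ chan f₁ f₂ a b :=
    fun x₂ hx₂ => ⟨hx₁.1, hx₁.2, hx₂.1, hx₂.2⟩
  have : IsFiniteMeasure (volume.restrict (Ioo (f₁ x₁) (f₂ x₁))) :=
    isFiniteMeasure_restrict.mpr measure_Ioo_lt_top.ne
  refine integral_sq_div_le_integral_sq_of_hasDerivAt hf ?_ (fun x₂ hx₂ => ?_) ?_ hflux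
  · exact hv.continuousOn.comp (continuous_const.prodMk continuous_id).continuousOn
      fun x₂ hx₂ => mk_mem_closure_chan hx₁ hf hx₂
  · have hnhds : closure (chan f₁ f₂ a b) ∈ 𝓝 (x₁, x₂) :=
      mem_of_superset ((isOpen_chan hf₁ hf₂).mem_nhds (hmem x₂ hx₂)) subset_closure
    exact ((hv.contDiffAt hnhds).differentiableAt one_ne_zero).hasFDerivAt.comp_hasDerivAt x₂
      ((hasDerivAt_const x₂ x₁).prodMk (hasDerivAt_id x₂))
  · refine MemLp.of_bound ((measurable_fderiv_apply_const ℝ v (0, 1)).comp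
      measurable_prodMk_left).aestronglyMeasurable K ?_
    exact ae_restrict_of_forall_mem measurableSet_Ioo fun x₂ hx₂ => hK _ (hmem x₂ hx₂)

end Channel

/-- Poincaré type inequality for the weighted `L²` norm of `v₁`. -/
theorem stmt_0 :
    ∃ M₀ : ℝ, 0 < M₀ ∧
      ∀ (f₁ f₂ : ℝ → ℝ) (d β : ℝ),
        ContDiff ℝ (⊤ : ℕ∞) f₁ → ContDiff ℝ (⊤ : ℕ∞) f₂ →
        0 < d → (∀ x₁ : ℝ, d ≤ f₂ x₁ - f₁ x₁) →
        (∀ x₁ : ℝ, |deriv f₁ x₁| ≤ β) → (∀ x₁ : ℝ, |deriv f₂ x₁| ≤ β) →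
        ∀ a b : ℝ, a < b →
          ∀ v₁ v₂ : ℝ × ℝ → ℝ,
            ContDiffOn ℝ 1 v₁ (closure (chan f₁ f₂ a b)) →
            ContDiffOn ℝ 1 v₂ (closure (chan f₁ f₂ a b)) →
            (∀ x₁ ∈ Ioo a b, (∫ x₂ in (f₁ x₁)..(f₂ x₁), v₁ (x₁, x₂)) = 0) →
            (∫ x in chan f₁ f₂ a b, (v₁ x / (f₂ x.1 - f₁ x.1)) ^ 2) ≤
              M₀ ^ 2 * ∫ x in chan f₁ f₂ a b, (fderiv ℝ v₁ x (0, 1)) ^ 2 := by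
  refine ⟨1, one_pos, fun f₁ f₂ d β hf₁ hf₂ hd hdf _ _ a b _ v₁ _ hv₁ _ hflux => ?_⟩
  have hf₁c := hf₁.continuous
  have hf₂c := hf₂.continuous
  have hC := isOpen_chan (a := a) (b := b) hf₁c hf₂c
  have hcpt := isCompact_closure_chan (a := a) (b := b) hf₁c hf₂c
  have : IsFiniteMeasure (volume.restrict (chan f₁ f₂ a b)) := isFiniteMeasure_restrict.mpr
    (measure_mono subset_closure |>.trans_lt hcpt.measure_lt_top).ne
  have hwidth : ∀ x₁, 0 < f₂ x₁ - f₁ x₁ := fun x₁ => hd.trans_le (hdf x₁)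
  obtain ⟨B, hB⟩ := hcpt.exists_bound_of_continuousOn hv₁.continuousOn
  obtain ⟨K, hK⟩ := hv₁.exists_bound_fderiv hcpt hC subset_closure
  have hpartial : ∀ x ∈ chan f₁ f₂ a b, |fderiv ℝ v₁ x (0, 1)| ≤ K := fun x hx =>
    ((fderiv ℝ v₁ x).le_opNorm (0, 1)).trans (by simpa [Prod.norm_def] using hK x hx)
  have hl : MemLp (fun x => v₁ x / (f₂ x.1 - f₁ x.1)) 2 (volume.restrict (chan f₁ f₂ a b)) := by
    refine MemLp.of_bound (ContinuousOn.aestronglyMeasurable ?_ hC.measurableSet) (B / d)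
      (ae_restrict_of_forall_mem hC.measurableSet fun x hx => ?_)
    · exact (hv₁.continuousOn.mono subset_closure).div (by fun_prop) fun x _ => (hwidth x.1).ne'
    · rw [norm_div, Real.norm_of_nonneg (hwidth x.1).le]
      exact div_le_div₀ ((norm_nonneg _).trans (hB x (subset_closure hx)))
        (hB x (subset_closure hx)) hd (hdf x.1)
  have hr : MemLp (fun x => fderiv ℝ v₁ x (0, 1)) 2 (volume.restrict (chan f₁ f₂ a b)) :=
    MemLp.of_bound (measurable_fderiv_apply_const ℝ v₁ (0, 1)).aestronglyMeasurable K
      (ae_restrict_of_forall_mem hC.measurableSet hpartial)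
  rw [one_pow, one_mul]
  exact setIntegral_chan_mono_of_slice hf₁c.measurable hf₂c.measurable hl.integrable_sq
    hr.integrable_sq fun x₁ hx₁ => integral_slice_sq_div_le_integral_slice_sq_fderiv hf₁c hf₂c
      hv₁ hpartial hx₁ (by linarith [hwidth x₁]) (hflux x₁ hx₁)
end

section
/- Let t₀ < T, δ₁ ∈ (0,1), and let z, φ : [t₀,T] → ℝ be C¹, nonnegative, nondecreasing, with φ not identically zero. Let Ψ : [t₀,T] × [0,∞) → [0,∞) be such that for each fixed t the map s ↦ Ψ(t,s) is monotonically increasing with Ψ(t,0) = 0 and Ψ(t,s) → ∞ as s → ∞. If z(t) ≤ Ψ(t, z'(t)) + (1−δ₁) φ(t) and φ(t) ≥ δ₁^{-1} Ψ(t, φ'(t)) for all t ∈ [t₀,T], and z(T) ≤ φ(T), then z(t) ≤ φ(t) for every t ∈ [t₀,T]. -/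
open Set Filter
open scoped Topology

lemma aux_deriv_nonneg {f : ℝ → ℝ} {f' a b x : ℝ} (hx : x ∈ Ioo a b)
    (h : HasDerivAt f f' x) (hm : MonotoneOn f (Icc a b)) : 0 ≤ f' := by
  have h1 : Tendsto (slope f x) (𝓝[>] x) (𝓝 f') := by
    have h2 := h.hasDerivWithinAt (s := Ioi x)
    rw [hasDerivWithinAt_iff_tendsto_slope] at h2
    simpa [Set.diff_singleton_eq_self (by simp : x ∉ Ioi x)] using h2
  refine ge_of_tendsto h1 ?_
  filter_upwards [Ioo_mem_nhdsGT_of_mem ⟨le_refl x, hx.2⟩] with y hy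
  have hfy : f x ≤ f y :=
    hm ⟨hx.1.le, hx.2.le⟩ ⟨hx.1.le.trans hy.1.le, hy.2.le⟩ hy.1.le
  have : slope f x y = (f y - f x) / (y - x) := by
    simp [slope_def_field, div_eq_inv_mul]
  rw [this]
  exact div_nonneg (sub_nonneg.2 hfy) (sub_pos.2 hy.1).le

/-- comparison principle for differential inequalities on `[t₀, T]`. -/
theorem stmt_5 (t₀ T δ₁ : ℝ) (ht : t₀ < T) (hδ₁ : δ₁ ∈ Ioo (0 : ℝ) 1)
    (z z' φ φ' : ℝ → ℝ) (Ψ : ℝ → ℝ → ℝ)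
    -- `z`, `φ` are C¹ on `[t₀,T]`
    (hzderiv : ∀ t ∈ Icc t₀ T, HasDerivWithinAt z (z' t) (Icc t₀ T) t)
    (hzderivcont : ContinuousOn z' (Icc t₀ T))
    (hφderiv : ∀ t ∈ Icc t₀ T, HasDerivWithinAt φ (φ' t) (Icc t₀ T) t)
    (hφderivcont : ContinuousOn φ' (Icc t₀ T))
    -- nonnegative and nondecreasing
    (hznonneg : ∀ t ∈ Icc t₀ T, 0 ≤ z t) (hφnonneg : ∀ t ∈ Icc t₀ T, 0 ≤ φ t)
    (hzmono : MonotoneOn z (Icc t₀ T)) (hφmono : MonotoneOn φ (Icc t₀ T))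
    -- `φ` is not identically zero
    (hφnontriv : ∃ t ∈ Icc t₀ T, φ t ≠ 0)
    -- `Ψ(t, ·)` maps `[0,∞)` to `[0,∞)`, is increasing, vanishes at `0`, and tends to `∞`
    (hΨnonneg : ∀ t ∈ Icc t₀ T, ∀ s : ℝ, 0 ≤ s → 0 ≤ Ψ t s)
    (hΨmono : ∀ t ∈ Icc t₀ T, ∀ s₁ s₂ : ℝ, 0 ≤ s₁ → s₁ ≤ s₂ → Ψ t s₁ ≤ Ψ t s₂)
    (hΨzero : ∀ t ∈ Icc t₀ T, Ψ t 0 = 0)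
    (hΨtop : ∀ t ∈ Icc t₀ T, Tendsto (Ψ t) atTop atTop)
    -- the differential inequalities
    (hineqz : ∀ t ∈ Icc t₀ T, z t ≤ Ψ t (z' t) + (1 - δ₁) * φ t)
    (hineqφ : ∀ t ∈ Icc t₀ T, δ₁⁻¹ * Ψ t (φ' t) ≤ φ t)
    -- the endpoint comparison
    (hend : z T ≤ φ T) :
    ∀ t ∈ Icc t₀ T, z t ≤ φ t := by
  intro t₁ ht₁
  by_contra hcon
  push_neg at hcon
  -- w := z - φ
  set w : ℝ → ℝ := fun t => z t - φ t with hw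
  have hzcont : ContinuousOn z (Icc t₀ T) := fun x hx => (hzderiv x hx).continuousWithinAt
  have hφcont : ContinuousOn φ (Icc t₀ T) := fun x hx => (hφderiv x hx).continuousWithinAt
  have hwcont : ContinuousOn w (Icc t₀ T) := hzcont.sub hφcont
  -- the set where w ≤ 0 on [t₁, T]
  set A : Set ℝ := Icc t₁ T ∩ {t | w t ≤ 0} with hA
  have hT₁ : Icc t₁ T ⊆ Icc t₀ T := Icc_subset_Icc ht₁.1 le_rfl
  have hAclosed : IsClosed A :=
    ContinuousOn.preimage_isClosed_of_isClosed (hwcont.mono hT₁) isClosed_Icc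
      isClosed_Iic
  have hTA : T ∈ A := ⟨⟨ht₁.2, le_rfl⟩, by simp [hw]; linarith⟩
  have hAne : A.Nonempty := ⟨T, hTA⟩
  have hAbdd : BddBelow A := ⟨t₁, fun x hx => hx.1.1⟩
  set t₂ := sInf A with ht₂
  have ht₂A : t₂ ∈ A := hAclosed.csInf_mem hAne hAbdd
  have ht₂w : w t₂ ≤ 0 := ht₂A.2
  have ht₁t₂ : t₁ < t₂ := by
    rcases lt_or_eq_of_le ht₂A.1.1 with h | h
    · exact h
    · exfalso; rw [← h] at ht₂w; simp [hw] at ht₂w; linarith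
  -- every point of (t₁, t₂) has w > 0
  have hwpos : ∀ x ∈ Ioo t₁ t₂, 0 < w x := by
    intro x hx
    by_contra hle
    push_neg at hle
    have : x ∈ A := ⟨⟨hx.1.le, hx.2.le.trans ht₂A.1.2⟩, hle⟩
    exact absurd (csInf_le hAbdd this) (not_le.2 hx.2)
  -- main derivative positivity on Ioo t₁ t₂
  have hδ : 0 < δ₁ := hδ₁.1
  have key : ∀ x ∈ Ioo t₁ t₂, HasDerivAt w (z' x - φ' x) x ∧ 0 < z' x - φ' x := by
    intro x hx
    have hxI : x ∈ Ioo t₀ T := ⟨lt_of_le_of_lt ht₁.1 hx.1, lt_of_lt_of_le hx.2 ht₂A.1.2⟩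
    have hxIcc : x ∈ Icc t₀ T := ⟨hxI.1.le, hxI.2.le⟩
    have hnhds : Icc t₀ T ∈ 𝓝 x := Icc_mem_nhds hxI.1 hxI.2
    have hz' : HasDerivAt z (z' x) x := (hzderiv x hxIcc).hasDerivAt hnhds
    have hφ' : HasDerivAt φ (φ' x) x := (hφderiv x hxIcc).hasDerivAt hnhds
    have hz'0 : 0 ≤ z' x := aux_deriv_nonneg hxI hz' hzmono
    have hφ'0 : 0 ≤ φ' x := aux_deriv_nonneg hxI hφ' hφmono
    refine ⟨hz'.sub hφ', ?_⟩
    -- Ψ x (φ' x) ≤ δ₁ φ x < z x - (1-δ₁) φ x ≤ Ψ x (z' x)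
    have h1 : Ψ x (φ' x) ≤ δ₁ * φ x := by
      have := hineqφ x hxIcc
      rw [inv_mul_le_iff₀ hδ] at this
      linarith [this]
    have h2 : δ₁ * φ x < z x - (1 - δ₁) * φ x := by
      have := hwpos x hx
      simp [hw] at this
      nlinarith
    have h3 : z x - (1 - δ₁) * φ x ≤ Ψ x (z' x) := by
      have := hineqz x hxIcc; linarith
    have hΨlt : Ψ x (φ' x) < Ψ x (z' x) := lt_of_le_of_lt h1 (lt_of_lt_of_le h2 h3)
    by_contra hle
    push_neg at hle
    exact absurd (hΨmono x hxIcc (z' x) (φ' x) hz'0 (by linarith)) (not_le.2 hΨlt)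
  -- w is strictly monotone on [t₁, t₂]
  have hsub : Icc t₁ t₂ ⊆ Icc t₀ T := Icc_subset_Icc ht₁.1 ht₂A.1.2
  have hmono : StrictMonoOn w (Icc t₁ t₂) := by
    refine strictMonoOn_of_hasDerivWithinAt_pos (convex_Icc t₁ t₂)
      (hwcont.mono hsub) (f' := fun x => z' x - φ' x) ?_ ?_
    · intro x hx
      rw [interior_Icc] at hx
      exact ((key x hx).1).hasDerivWithinAt
    · intro x hx
      rw [interior_Icc] at hx
      exact (key x hx).2
  have : w t₁ < w t₂ :=
    hmono ⟨le_rfl, ht₁t₂.le⟩ ⟨ht₁t₂.le, le_rfl⟩ ht₁t₂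
  have hwt₁ : 0 < w t₁ := by simp [hw]; linarith
  linarith
end

section
/- The flux carrier g is smooth on Ω and satisfies: (i) div g = ∂_{x₁} g₁ + ∂_{x₂} g₂ = 0 in Ω; (ii) g(x) = 0 at every x ∈ Ω with x₂ ≤ f̄(x₁) and at every x with (f₂(x₁)−x₂)/(x₂−f̄(x₁)) < e^{−1/ε}; in particular g vanishes in a neighborhood of ∂Ω; (iii) ∫_{f₁(x₁)}^{f₂(x₁)} g₁(x₁,x₂) dx₂ = Φ for every x₁ ∈ ℝ. -/
open MeasureTheory Set

/-- The channel `Ω = {(x₁,x₂) : f₁(x₁) < x₂ < f₂(x₁)}`. -/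
def channel (f₁ f₂ : ℝ → ℝ) : Set (ℝ × ℝ) :=
  {x : ℝ × ℝ | f₁ x.1 < x.2 ∧ x.2 < f₂ x.1}

/-- The stream function `G` of the flux carrier. -/
noncomputable def Gfun (μ f₁ f₂ : ℝ → ℝ) (ε Φ : ℝ) (x : ℝ × ℝ) : ℝ :=
  if (f₁ x.1 + f₂ x.1) / 2 < x.2 then
    Φ * μ (1 + ε * Real.log ((f₂ x.1 - x.2) / (x.2 - (f₁ x.1 + f₂ x.1) / 2)))
  else 0

/-- The first component `g₁ = ∂_{x₂} G` of the flux carrier. -/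
noncomputable def gfun₁ (μ f₁ f₂ : ℝ → ℝ) (ε Φ : ℝ) (x : ℝ × ℝ) : ℝ :=
  fderiv ℝ (Gfun μ f₁ f₂ ε Φ) x (0, 1)

/-- The second component `g₂ = −∂_{x₁} G` of the flux carrier. -/
noncomputable def gfun₂ (μ f₁ f₂ : ℝ → ℝ) (ε Φ : ℝ) (x : ℝ × ℝ) : ℝ :=
  -(fderiv ℝ (Gfun μ f₁ f₂ ε Φ) x (1, 0))

/-!
The stream function `G` vanishes below the line halfway between `f̄` and `f₂` (the ratio in the
logarithm is `≥ 1` there) and equals `Φ` where that ratio has modulus `< e^{-1/ε}`; in between it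
is a smooth expression. Hence `g = (∂₂G, −∂₁G)` is smooth and divergence free (symmetry of second
derivatives), vanishes on both zones, which are neighbourhoods of the two walls, and its flux
through a cross-section is `G(x₁, c) − G(x₁, f₁ x₁) = Φ − 0` by the fundamental theorem of calculus,
for a cut `c` inside the plateau. On the upper wall `log 0 = 0` gives `G = 0` next to values `Φ`,
so there `G` is not differentiable and `fderiv` takes its junk value `0`.
-/

open Filter Topology
open scoped ContDiff

theorem fderiv_eq_zero_of_eventuallyEq_const {𝕜 E F : Type*} [NontriviallyNormedField 𝕜]
    [NormedAddCommGroup E] [NormedSpace 𝕜 E] [NormedAddCommGroup F] [NormedSpace 𝕜 F]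
    {f : E → F} {x : E} {c : F} (h : f =ᶠ[𝓝 x] fun _ => c) : fderiv 𝕜 f x = 0 := by
  rw [h.fderiv_eq, fderiv_const_apply]

theorem ContDiffAt.fderiv_apply_comm {E F : Type*} [NormedAddCommGroup E] [NormedSpace ℝ E]
    [NormedAddCommGroup F] [NormedSpace ℝ F] {f : E → F} {x : E} (hf : ContDiffAt ℝ 2 f x)
    (v w : E) :
    fderiv ℝ (fun y => fderiv ℝ f y w) x v = fderiv ℝ (fun y => fderiv ℝ f y v) x w := by
  have hdf : DifferentiableAt ℝ (fderiv ℝ f) x :=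
    (hf.fderiv_right (m := 1) le_rfl).differentiableAt one_ne_zero
  rw [fderiv_clm_apply hdf (differentiableAt_const w),
    fderiv_clm_apply hdf (differentiableAt_const v)]
  simpa using hf.isSymmSndFDerivAt (by simp) v w

theorem ContDiffAt.divergence_skewGradient_eq_zero {G : ℝ × ℝ → ℝ} {x : ℝ × ℝ}
    (hG : ContDiffAt ℝ 2 G x) :
    fderiv ℝ (fun y => fderiv ℝ G y (0, 1)) x (1, 0) +
      fderiv ℝ (fun y => -fderiv ℝ G y (1, 0)) x (0, 1) = 0 := by
  rw [fderiv_fun_neg, neg_apply, hG.fderiv_apply_comm, add_neg_cancel]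

theorem intervalIntegrable_fderiv_apply_vertical {G : ℝ × ℝ → ℝ} {x₁ a b : ℝ}
    (hG : ∀ t ∈ uIcc a b, ContDiffAt ℝ 1 G (x₁, t)) :
    IntervalIntegrable (fun t => fderiv ℝ G (x₁, t) (0, 1)) volume a b := by
  refine ContinuousOn.intervalIntegrable fun t ht => ?_
  exact (((hG t ht).continuousAt_fderiv one_ne_zero).clm_apply continuousAt_const).comp
    (f := fun s : ℝ => (x₁, s)) (by fun_prop) |>.continuousWithinAt

theorem integral_fderiv_apply_vertical {G : ℝ × ℝ → ℝ} {x₁ a b : ℝ}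
    (hG : ∀ t ∈ uIcc a b, ContDiffAt ℝ 1 G (x₁, t)) :
    ∫ t in a..b, fderiv ℝ G (x₁, t) (0, 1) = G (x₁, b) - G (x₁, a) := by
  refine intervalIntegral.integral_eq_sub_of_hasDerivAt (f := fun s => G (x₁, s))
    (fun t ht => ?_) (intervalIntegrable_fderiv_apply_vertical hG)
  exact ((hG t ht).differentiableAt one_ne_zero).hasFDerivAt.comp_hasDerivAt t
    ((hasDerivAt_const t x₁).prodMk (hasDerivAt_id t))

theorem isOpen_channel {f₁ f₂ : ℝ → ℝ} (hf₁ : Continuous f₁) (hf₂ : Continuous f₂) :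
    IsOpen (channel f₁ f₂) :=
  (isOpen_lt (by fun_prop) (by fun_prop)).and (isOpen_lt (by fun_prop) (by fun_prop))

theorem eq_or_eq_of_mem_frontier_channel {f₁ f₂ : ℝ → ℝ} (hf₁ : Continuous f₁)
    (hf₂ : Continuous f₂) {x : ℝ × ℝ} (hx : x ∈ frontier (channel f₁ f₂)) :
    x.2 = f₁ x.1 ∨ x.2 = f₂ x.1 := by
  have hle : f₁ x.1 ≤ x.2 ∧ x.2 ≤ f₂ x.1 := by
    refine closure_minimal (t := {y : ℝ × ℝ | f₁ y.1 ≤ y.2 ∧ y.2 ≤ f₂ y.1})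
      (fun y hy => ⟨hy.1.le, hy.2.le⟩) ?_ (frontier_subset_closure hx)
    exact (isClosed_le (by fun_prop) (by fun_prop)).and (isClosed_le (by fun_prop) (by fun_prop))
  have hnot : x ∉ channel f₁ f₂ := by
    rw [frontier, (isOpen_channel hf₁ hf₂).interior_eq] at hx
    exact hx.2
  by_contra! hne
  exact hnot ⟨lt_of_le_of_ne hle.1 hne.1.symm, lt_of_le_of_ne hle.2 hne.2⟩

section FluxCarrier

variable {μ f₁ f₂ : ℝ → ℝ} {ε Φ : ℝ}

def zeroZone (f₁ f₂ : ℝ → ℝ) : Set (ℝ × ℝ) :=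
  {x | x.2 - (f₁ x.1 + f₂ x.1) / 2 < f₂ x.1 - x.2}

/-- Written with `|·|` and without division so that it is open and contains the upper wall. -/
def plateauZone (f₁ f₂ : ℝ → ℝ) (ε : ℝ) : Set (ℝ × ℝ) :=
  {x | |f₂ x.1 - x.2| < Real.exp (-1 / ε) * (x.2 - (f₁ x.1 + f₂ x.1) / 2)}

theorem isOpen_zeroZone (hf₁ : Continuous f₁) (hf₂ : Continuous f₂) :
    IsOpen (zeroZone f₁ f₂) :=
  isOpen_lt (by fun_prop) (by fun_prop)

theorem isOpen_plateauZone (hf₁ : Continuous f₁) (hf₂ : Continuous f₂) :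
    IsOpen (plateauZone f₁ f₂ ε) :=
  isOpen_lt (by fun_prop) (by fun_prop)

theorem mem_zeroZone_union_plateauZone {x : ℝ × ℝ} (hx : x.2 < f₂ x.1)
    (hcond : x.2 ≤ (f₁ x.1 + f₂ x.1) / 2 ∨
      (f₂ x.1 - x.2) / (x.2 - (f₁ x.1 + f₂ x.1) / 2) < Real.exp (-1 / ε)) :
    x ∈ zeroZone f₁ f₂ ∪ plateauZone f₁ f₂ ε := by
  by_cases hmid : x.2 ≤ (f₁ x.1 + f₂ x.1) / 2
  · exact Or.inl (show x.2 - (f₁ x.1 + f₂ x.1) / 2 < f₂ x.1 - x.2 by linarith)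
  · have hden : 0 < x.2 - (f₁ x.1 + f₂ x.1) / 2 := by linarith
    refine Or.inr (show |f₂ x.1 - x.2| < _ from ?_)
    rw [abs_of_pos (by linarith), ← div_lt_iff₀ hden]
    exact hcond.resolve_left hmid

theorem Gfun_eq_zero_of_mem_zeroZone (hμ₀ : ∀ t, 1 ≤ t → μ t = 0) (hε : 0 ≤ ε) {x : ℝ × ℝ}
    (hx : x ∈ zeroZone f₁ f₂) : Gfun μ f₁ f₂ ε Φ x = 0 := by
  rw [Gfun]
  split_ifs with hmid
  · have hratio : 1 ≤ (f₂ x.1 - x.2) / (x.2 - (f₁ x.1 + f₂ x.1) / 2) := by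
      rw [le_div_iff₀ (by linarith)]
      exact (one_mul _).le.trans hx.le
    rw [hμ₀ _ (le_add_of_nonneg_right (mul_nonneg hε (Real.log_nonneg hratio))), mul_zero]
  · rfl

theorem Gfun_eq_of_mem_plateauZone (hμ₁ : ∀ t, t ≤ 0 → μ t = 1) (hε : 0 < ε) {x : ℝ × ℝ}
    (hx : x ∈ plateauZone f₁ f₂ ε) (hwall : x.2 ≠ f₂ x.1) : Gfun μ f₁ f₂ ε Φ x = Φ := by
  have hden : 0 < x.2 - (f₁ x.1 + f₂ x.1) / 2 :=
    pos_of_mul_pos_right ((abs_nonneg _).trans_lt hx) (Real.exp_pos _).le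
  rw [Gfun, if_pos (by linarith)]
  set r := (f₂ x.1 - x.2) / (x.2 - (f₁ x.1 + f₂ x.1) / 2)
  have hr : |r| < Real.exp (-1 / ε) := by
    rw [abs_div, abs_of_pos hden, div_lt_iff₀ hden]
    exact hx
  have hlog : Real.log r < -1 / ε := by
    rw [← Real.log_abs, ← Real.log_exp (-1 / ε)]
    exact Real.log_lt_log (abs_pos.2 (div_ne_zero (sub_ne_zero.2 hwall.symm) hden.ne')) hr
  have harg : 1 + ε * Real.log r ≤ 0 := by
    have := mul_lt_mul_of_pos_left hlog hε
    rw [mul_div_cancel₀ _ hε.ne'] at this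
    linarith
  rw [hμ₁ _ harg, mul_one]

theorem contDiffAt_Gfun (hμ : ContDiff ℝ ∞ μ) (hμ₀ : ∀ t, 1 ≤ t → μ t = 0) (hε : 0 ≤ ε)
    (hf₁ : ContDiff ℝ ∞ f₁) (hf₂ : ContDiff ℝ ∞ f₂) {x : ℝ × ℝ} (hx : x.2 < f₂ x.1) :
    ContDiffAt ℝ ∞ (Gfun μ f₁ f₂ ε Φ) x := by
  by_cases hmid : (f₁ x.1 + f₂ x.1) / 2 < x.2
  · have hopen : IsOpen {y : ℝ × ℝ | (f₁ y.1 + f₂ y.1) / 2 < y.2} :=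
      isOpen_lt (by fun_prop) (by fun_prop)
    have hloc : Gfun μ f₁ f₂ ε Φ =ᶠ[𝓝 x] fun y =>
        Φ * μ (1 + ε * Real.log ((f₂ y.1 - y.2) / (y.2 - (f₁ y.1 + f₂ y.1) / 2))) :=
      eventually_of_mem (hopen.mem_nhds hmid) fun y hy => if_pos hy
    refine ContDiffAt.congr_of_eventuallyEq ?_ hloc
    have hratio : (f₂ x.1 - x.2) / (x.2 - (f₁ x.1 + f₂ x.1) / 2) ≠ 0 :=
      (div_pos (by linarith) (by linarith)).ne'
    have hden : x.2 - (f₁ x.1 + f₂ x.1) / 2 ≠ 0 := by linarith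
    fun_prop (disch := assumption)
  · refine (contDiffAt_const (c := (0 : ℝ))).congr_of_eventuallyEq ?_
    refine eventually_of_mem ((isOpen_zeroZone hf₁.continuous hf₂.continuous).mem_nhds ?_)
      fun y hy => Gfun_eq_zero_of_mem_zeroZone hμ₀ hε hy
    show x.2 - (f₁ x.1 + f₂ x.1) / 2 < f₂ x.1 - x.2
    linarith

theorem fderiv_Gfun_eq_zero_of_mem_zeroZone (hμ₀ : ∀ t, 1 ≤ t → μ t = 0) (hε : 0 ≤ ε)
    (hf₁ : Continuous f₁) (hf₂ : Continuous f₂) {x : ℝ × ℝ} (hx : x ∈ zeroZone f₁ f₂) :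
    fderiv ℝ (Gfun μ f₁ f₂ ε Φ) x = 0 :=
  fderiv_eq_zero_of_eventuallyEq_const <| eventually_of_mem
    ((isOpen_zeroZone hf₁ hf₂).mem_nhds hx) fun _ hy => Gfun_eq_zero_of_mem_zeroZone hμ₀ hε hy

theorem not_continuousAt_Gfun_of_mem_plateauZone (hμ₀ : ∀ t, 1 ≤ t → μ t = 0)
    (hμ₁ : ∀ t, t ≤ 0 → μ t = 1) (hε : 0 < ε) (hf₁ : Continuous f₁) (hf₂ : Continuous f₂)
    (hΦ : Φ ≠ 0) {x : ℝ × ℝ} (hx : x ∈ plateauZone f₁ f₂ ε) (hwall : x.2 = f₂ x.1) :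
    ¬ ContinuousAt (Gfun μ f₁ f₂ ε Φ) x := by
  intro hcont
  have hmid : (f₁ x.1 + f₂ x.1) / 2 < x.2 := by
    have := pos_of_mul_pos_right ((abs_nonneg _).trans_lt hx) (Real.exp_pos _).le
    linarith
  have hGx : Gfun μ f₁ f₂ ε Φ x = 0 := by
    rw [Gfun, if_pos hmid, ← hwall, sub_self, zero_div, Real.log_zero, mul_zero, add_zero,
      hμ₀ 1 le_rfl, mul_zero]
  have hpath : Tendsto (fun t : ℝ => (x.1, x.2 + t)) (𝓝[>] 0) (𝓝 x) := by
    have : Tendsto (fun t : ℝ => (x.1, x.2 + t)) (𝓝 0) (𝓝 (x.1, x.2 + 0)) :=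
      (Continuous.tendsto (by fun_prop) 0)
    simpa using this.mono_left nhdsWithin_le_nhds
  have habove : ∀ᶠ t in 𝓝[>] 0, Gfun μ f₁ f₂ ε Φ (x.1, x.2 + t) = Φ := by
    filter_upwards [hpath.eventually ((isOpen_plateauZone hf₁ hf₂).mem_nhds hx),
      self_mem_nhdsWithin] with t ht (htpos : 0 < t)
    exact Gfun_eq_of_mem_plateauZone hμ₁ hε ht (by simp only; linarith)
  refine hΦ (tendsto_nhds_unique (tendsto_const_nhds.congr' (habove.mono fun _ => Eq.symm)) ?_)
  have hlim := hcont.tendsto.comp hpath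
  rwa [hGx] at hlim

theorem fderiv_Gfun_eq_zero_of_mem_plateauZone (hμ₀ : ∀ t, 1 ≤ t → μ t = 0)
    (hμ₁ : ∀ t, t ≤ 0 → μ t = 1) (hε : 0 < ε) (hf₁ : Continuous f₁) (hf₂ : Continuous f₂)
    {x : ℝ × ℝ} (hx : x ∈ plateauZone f₁ f₂ ε) : fderiv ℝ (Gfun μ f₁ f₂ ε Φ) x = 0 := by
  by_cases hwall : x.2 = f₂ x.1
  · by_cases hΦ : Φ = 0
    · have hG : Gfun μ f₁ f₂ ε Φ = fun _ => 0 := by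
        funext y
        simp [Gfun, hΦ]
      rw [hG, fderiv_const_apply]
    · exact fderiv_zero_of_not_differentiableAt fun hdiff =>
        not_continuousAt_Gfun_of_mem_plateauZone hμ₀ hμ₁ hε hf₁ hf₂ hΦ hx hwall hdiff.continuousAt
  · have hopen : IsOpen (plateauZone f₁ f₂ ε ∩ {y | y.2 ≠ f₂ y.1}) :=
      (isOpen_plateauZone hf₁ hf₂).inter (isOpen_ne_fun (by fun_prop) (by fun_prop))
    exact fderiv_eq_zero_of_eventuallyEq_const <| eventually_of_mem (hopen.mem_nhds ⟨hx, hwall⟩)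
      fun _ hy => Gfun_eq_of_mem_plateauZone hμ₁ hε hy.1 hy.2

theorem eventually_gfun_eq_zero (hμ₀ : ∀ t, 1 ≤ t → μ t = 0) (hμ₁ : ∀ t, t ≤ 0 → μ t = 1)
    (hε : 0 < ε) (hf₁ : Continuous f₁) (hf₂ : Continuous f₂) {x : ℝ × ℝ}
    (hx : x ∈ zeroZone f₁ f₂ ∪ plateauZone f₁ f₂ ε) :
    ∀ᶠ y in 𝓝 x, gfun₁ μ f₁ f₂ ε Φ y = 0 ∧ gfun₂ μ f₁ f₂ ε Φ y = 0 := by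
  filter_upwards [((isOpen_zeroZone hf₁ hf₂).union (isOpen_plateauZone hf₁ hf₂)).mem_nhds hx]
    with y hy
  have hG : fderiv ℝ (Gfun μ f₁ f₂ ε Φ) y = 0 := by
    rcases hy with hy | hy
    · exact fderiv_Gfun_eq_zero_of_mem_zeroZone hμ₀ hε.le hf₁ hf₂ hy
    · exact fderiv_Gfun_eq_zero_of_mem_plateauZone hμ₀ hμ₁ hε hf₁ hf₂ hy
  simp [gfun₁, gfun₂, hG]

theorem integral_gfun₁_eq (hμ : ContDiff ℝ ∞ μ) (hμ₀ : ∀ t, 1 ≤ t → μ t = 0)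
    (hμ₁ : ∀ t, t ≤ 0 → μ t = 1) (hε : 0 < ε) (hf₁ : ContDiff ℝ ∞ f₁) (hf₂ : ContDiff ℝ ∞ f₂)
    {x₁ : ℝ} (hf : f₁ x₁ < f₂ x₁) :
    ∫ x₂ in (f₁ x₁)..(f₂ x₁), gfun₁ μ f₁ f₂ ε Φ (x₁, x₂) = Φ := by
  set m := (f₁ x₁ + f₂ x₁) / 2 with hm
  set e := Real.exp (-1 / ε)
  obtain ⟨c, hcut, hc⟩ : ∃ c, f₂ x₁ - c < e * (c - m) ∧ c < f₂ x₁ := by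
    have hev : ∀ᶠ c in 𝓝 (f₂ x₁), f₂ x₁ - c < e * (c - m) := by
      refine (continuous_sub_left (f₂ x₁)).continuousAt.eventually_lt
        ((continuous_sub_right m).continuousAt.const_mul e) ?_
      simp only [sub_self]
      exact mul_pos (Real.exp_pos _) (by linarith)
    exact ((hev.filter_mono nhdsWithin_le_nhds).and self_mem_nhdsWithin).exists (f := 𝓝[<] f₂ x₁)
  have hmc : m < c := by
    have := pos_of_mul_pos_right ((sub_pos.2 hc).trans hcut) (Real.exp_pos _).le
    linarith
  have hsegment : ∀ t ∈ uIcc c (f₂ x₁), (x₁, t) ∈ plateauZone f₁ f₂ ε := by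
    intro t ht
    rw [uIcc_of_le hc.le] at ht
    show |f₂ x₁ - t| < e * (t - m)
    rw [abs_of_nonneg (by linarith [ht.2])]
    nlinarith [Real.exp_pos (-1 / ε), ht.1]
  have hsmooth : ∀ t ∈ uIcc (f₁ x₁) c, ContDiffAt ℝ 1 (Gfun μ f₁ f₂ ε Φ) (x₁, t) := by
    intro t ht
    rw [uIcc_of_le (by linarith)] at ht
    exact (contDiffAt_Gfun hμ hμ₀ hε.le hf₁ hf₂ (by linarith [ht.2] : t < f₂ x₁)).of_le
      (WithTop.coe_le_coe.2 le_top)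
  have hbottom : Gfun μ f₁ f₂ ε Φ (x₁, f₁ x₁) = 0 :=
    Gfun_eq_zero_of_mem_zeroZone hμ₀ hε.le (show f₁ x₁ - m < f₂ x₁ - f₁ x₁ by linarith)
  have htop : Gfun μ f₁ f₂ ε Φ (x₁, c) = Φ :=
    Gfun_eq_of_mem_plateauZone hμ₁ hε (hsegment c left_mem_uIcc) hc.ne
  have hvanish : EqOn (fun t => gfun₁ μ f₁ f₂ ε Φ (x₁, t)) 0 (uIcc c (f₂ x₁)) := fun t ht =>
    (eventually_gfun_eq_zero hμ₀ hμ₁ hε hf₁.continuous hf₂.continuous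
      (Or.inr (hsegment t ht))).self_of_nhds.1
  have hlower : IntervalIntegrable (fun t => gfun₁ μ f₁ f₂ ε Φ (x₁, t)) volume (f₁ x₁) c :=
    intervalIntegrable_fderiv_apply_vertical hsmooth
  have hupper : IntervalIntegrable (fun t => gfun₁ μ f₁ f₂ ε Φ (x₁, t)) volume c (f₂ x₁) :=
    (continuousOn_const.congr hvanish).intervalIntegrable
  rw [← intervalIntegral.integral_add_adjacent_intervals hlower hupper,
    intervalIntegral.integral_congr hvanish]
  simp only [gfun₁, Pi.zero_apply, intervalIntegral.integral_zero, add_zero]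
  rw [integral_fderiv_apply_vertical hsmooth, htop, hbottom, sub_zero]

end FluxCarrier

theorem stmt_8_general (μ : ℝ → ℝ)
    (hμsmooth : ContDiff ℝ (⊤ : ℕ∞) μ)
    (hμ₁ : ∀ t : ℝ, t ≤ 0 → μ t = 1) (hμ₀ : ∀ t : ℝ, 1 ≤ t → μ t = 0)
    (f₁ f₂ : ℝ → ℝ) (d : ℝ)
    (hf₁ : ContDiff ℝ (⊤ : ℕ∞) f₁) (hf₂ : ContDiff ℝ (⊤ : ℕ∞) f₂)
    (hd : 0 < d) (hfd : ∀ x₁ : ℝ, d ≤ f₂ x₁ - f₁ x₁)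
    (ε Φ : ℝ) (hε : ε ∈ Ioo (0 : ℝ) 1) :
    -- (i) `g` is smooth and divergence free in `Ω`
    ContDiffOn ℝ (⊤ : ℕ∞) (gfun₁ μ f₁ f₂ ε Φ) (channel f₁ f₂) ∧
    ContDiffOn ℝ (⊤ : ℕ∞) (gfun₂ μ f₁ f₂ ε Φ) (channel f₁ f₂) ∧
    (∀ x ∈ channel f₁ f₂,
      fderiv ℝ (gfun₁ μ f₁ f₂ ε Φ) x (1, 0) + fderiv ℝ (gfun₂ μ f₁ f₂ ε Φ) x (0, 1) = 0) ∧
    -- (ii) `g` vanishes below the middle curve and close to the upper boundary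
    (∀ x ∈ channel f₁ f₂,
      (x.2 ≤ (f₁ x.1 + f₂ x.1) / 2 ∨
        (f₂ x.1 - x.2) / (x.2 - (f₁ x.1 + f₂ x.1) / 2) < Real.exp (-1 / ε)) →
      gfun₁ μ f₁ f₂ ε Φ x = 0 ∧ gfun₂ μ f₁ f₂ ε Φ x = 0) ∧
    -- in particular `g` vanishes in a neighborhood of `∂Ω`
    (∀ x ∈ frontier (channel f₁ f₂),
      ∀ᶠ y in nhds x, gfun₁ μ f₁ f₂ ε Φ y = 0 ∧ gfun₂ μ f₁ f₂ ε Φ y = 0) ∧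
    -- (iii) the flux constraint
    (∀ x₁ : ℝ, (∫ x₂ in (f₁ x₁)..(f₂ x₁), gfun₁ μ f₁ f₂ ε Φ (x₁, x₂)) = Φ) := by
  have hε₀ : 0 < ε := hε.1
  have hgap : ∀ t, f₁ t < f₂ t := fun t => by linarith [hfd t]
  have hG : ∀ x ∈ channel f₁ f₂, ContDiffAt ℝ ∞ (Gfun μ f₁ f₂ ε Φ) x := fun x hx =>
    contDiffAt_Gfun hμsmooth hμ₀ hε₀.le hf₁ hf₂ hx.2
  have hpartial : ∀ x ∈ channel f₁ f₂, ∀ v : ℝ × ℝ,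
      ContDiffAt ℝ ∞ (fun y => fderiv ℝ (Gfun μ f₁ f₂ ε Φ) y v) x := fun x hx v =>
    ((hG x hx).fderiv_right (by simp)).clm_apply contDiffAt_const
  have hvanish : ∀ x ∈ zeroZone f₁ f₂ ∪ plateauZone f₁ f₂ ε,
      ∀ᶠ y in 𝓝 x, gfun₁ μ f₁ f₂ ε Φ y = 0 ∧ gfun₂ μ f₁ f₂ ε Φ y = 0 := fun x =>
    eventually_gfun_eq_zero hμ₀ hμ₁ hε₀ hf₁.continuous hf₂.continuous
  refine ⟨fun x hx => (hpartial x hx _).contDiffWithinAt,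
    fun x hx => (hpartial x hx _).neg.contDiffWithinAt,
    fun x hx => ((hG x hx).of_le (WithTop.coe_le_coe.2 le_top)).divergence_skewGradient_eq_zero,
    fun x hx hcond => (hvanish x (mem_zeroZone_union_plateauZone hx.2 hcond)).self_of_nhds,
    fun x hx => ?_, fun x₁ => integral_gfun₁_eq hμsmooth hμ₀ hμ₁ hε₀ hf₁ hf₂ (hgap x₁)⟩
  refine hvanish x ?_
  rcases eq_or_eq_of_mem_frontier_channel hf₁.continuous hf₂.continuous hx with hbot | htop
  · exact Or.inl (show x.2 - (f₁ x.1 + f₂ x.1) / 2 < f₂ x.1 - x.2 by linarith [hgap x.1])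
  · refine Or.inr (show |f₂ x.1 - x.2| < Real.exp (-1 / ε) * _ from ?_)
    rw [htop, sub_self, abs_zero]
    exact mul_pos (Real.exp_pos _) (by linarith [hgap x.1])

/-- basic properties of the flux carrier `g = (∂_{x₂}G, −∂_{x₁}G)`:
it is smooth and divergence free in `Ω`, vanishes where `x₂ ≤ f̄(x₁)` and where
`(f₂(x₁)−x₂)/(x₂−f̄(x₁)) < e^{−1/ε}` (in particular in a neighborhood of `∂Ω`),
and carries flux `Φ` through every cross-section. -/
theorem stmt_8 (μ : ℝ → ℝ)
    (hμsmooth : ContDiff ℝ (⊤ : ℕ∞) μ) (hμanti : Antitone μ)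
    (hμ₁ : ∀ t : ℝ, t ≤ 0 → μ t = 1) (hμ₀ : ∀ t : ℝ, 1 ≤ t → μ t = 0)
    (f₁ f₂ : ℝ → ℝ) (d β : ℝ)
    (hf₁ : ContDiff ℝ (⊤ : ℕ∞) f₁) (hf₂ : ContDiff ℝ (⊤ : ℕ∞) f₂)
    (hd : 0 < d) (hfd : ∀ x₁ : ℝ, d ≤ f₂ x₁ - f₁ x₁)
    (hβ₁ : ∀ x₁ : ℝ, |deriv f₁ x₁| ≤ β) (hβ₂ : ∀ x₁ : ℝ, |deriv f₂ x₁| ≤ β)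
    (ε Φ : ℝ) (hε : ε ∈ Ioo (0 : ℝ) 1) (hΦ : 0 ≤ Φ) :
    -- (i) `g` is smooth and divergence free in `Ω`
    ContDiffOn ℝ (⊤ : ℕ∞) (gfun₁ μ f₁ f₂ ε Φ) (channel f₁ f₂) ∧
    ContDiffOn ℝ (⊤ : ℕ∞) (gfun₂ μ f₁ f₂ ε Φ) (channel f₁ f₂) ∧
    (∀ x ∈ channel f₁ f₂,
      fderiv ℝ (gfun₁ μ f₁ f₂ ε Φ) x (1, 0) + fderiv ℝ (gfun₂ μ f₁ f₂ ε Φ) x (0, 1) = 0) ∧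
    -- (ii) `g` vanishes below the middle curve and close to the upper boundary
    (∀ x ∈ channel f₁ f₂,
      (x.2 ≤ (f₁ x.1 + f₂ x.1) / 2 ∨
        (f₂ x.1 - x.2) / (x.2 - (f₁ x.1 + f₂ x.1) / 2) < Real.exp (-1 / ε)) →
      gfun₁ μ f₁ f₂ ε Φ x = 0 ∧ gfun₂ μ f₁ f₂ ε Φ x = 0) ∧
    -- in particular `g` vanishes in a neighborhood of `∂Ω`
    (∀ x ∈ frontier (channel f₁ f₂),
      ∀ᶠ y in nhds x, gfun₁ μ f₁ f₂ ε Φ y = 0 ∧ gfun₂ μ f₁ f₂ ε Φ y = 0) ∧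
    -- (iii) the flux constraint
    (∀ x₁ : ℝ, (∫ x₂ in (f₁ x₁)..(f₂ x₁), gfun₁ μ f₁ f₂ ε Φ (x₁, x₂)) = Φ) :=
  stmt_8_general μ hμsmooth hμ₁ hμ₀ f₁ f₂ d hf₁ hf₂ hd hfd ε Φ hε
end

section
/- Suppose in addition that γ := max_{i=1,2} sup_{x₁∈ℝ} |f_i''(x₁) f(x₁)| < ∞. Then there exist constants C(ε) > 0 depending only on ε, μ, β and C(ε,γ) > 0 depending only on ε, γ, μ, β such that for all x ∈ Ω: |g(x)| ≤ C(ε) Φ / f(x₁) and |∇g(x)| ≤ C(ε,γ) Φ / f(x₁)². -/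
open MeasureTheory Set

/-!
Write `a = f₂ - x₂`, `b = x₂ - f̄` and `φ = 1 + ε (log a - log b)`, so that `G = Φ μ(φ)` where
`b > 0`. Where `a > b`, either `b ≤ 0` and `G = 0` by definition, or `φ > 1`; where `φ < 0`,
`μ(φ) = 1`. In both regions `G` is locally constant and `g`, `∇g` vanish. On the rest of `Ω`,
`0 ≤ φ ≤ 1`, which forces `f / (4 e^{1/ε}) ≤ a ≤ b`. There `log a` and `log b` have gradients
of size `O(1/f)` (as `|f_i'| ≤ β`) and Hessians of size `O(1/f²)` (as `|f_i''| ≤ γ / f`), and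
the chain rule `D²(μ ∘ φ) = μ''(φ) Dφ ⊗ Dφ + μ'(φ) D²φ` gives `‖DG‖ = O(Φ / f)` and
`‖D²G‖ = O(Φ / f²)`; the entries of `g` and `∇g` are values of these operators at unit vectors.
-/

open ContinuousLinearMap Filter Topology

section SecondOrder

variable {E F : Type*} [NormedAddCommGroup E] [NormedSpace ℝ E]
  [NormedAddCommGroup F] [NormedSpace ℝ F] {x : E}

theorem HasFDerivAt.exists_smul_norm_le {c : E → ℝ} {c' : E →L[ℝ] ℝ} {L : E → F}
    {L' : E →L[ℝ] F} (hc : HasFDerivAt c c' x) (hL : HasFDerivAt L L' x) :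
    ∃ D : E →L[ℝ] F, HasFDerivAt (fun y => c y • L y) D x ∧
      ‖D‖ ≤ |c x| * ‖L'‖ + ‖c'‖ * ‖L x‖ := by
  refine ⟨_, hc.fun_smul hL, (norm_add_le _ _).trans_eq ?_⟩
  rw [norm_smul, norm_smulRight_apply, Real.norm_eq_abs]

/-- The second derivative of `μ ∘ φ`, as the derivative of `y ↦ μ' (φ y) • φ' y`. -/
theorem HasFDerivAt.exists_deriv_comp_smul_norm_le {μ : ℝ → ℝ} {φ : E → ℝ}
    {φ' : E → E →L[ℝ] ℝ} {φ'' : E →L[ℝ] E →L[ℝ] ℝ}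
    (hμ : DifferentiableAt ℝ (deriv μ) (φ x)) (hφ : HasFDerivAt φ (φ' x) x)
    (hφ' : HasFDerivAt φ' φ'' x) :
    ∃ D : E →L[ℝ] E →L[ℝ] ℝ, HasFDerivAt (fun y => deriv μ (φ y) • φ' y) D x ∧
      ‖D‖ ≤ |deriv (deriv μ) (φ x)| * ‖φ' x‖ ^ 2 + |deriv μ (φ x)| * ‖φ''‖ := by
  obtain ⟨D, hD, hDle⟩ := (hμ.hasDerivAt.comp_hasFDerivAt x hφ).exists_smul_norm_le hφ'
  refine ⟨D, hD, hDle.trans_eq ?_⟩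
  rw [norm_smul, Real.norm_eq_abs, Function.comp_apply]
  ring

theorem HasFDerivAt.abs_fderiv_apply_le {G : E → ℝ} {L : E → E →L[ℝ] ℝ}
    {D : E →L[ℝ] E →L[ℝ] ℝ} (hD : HasFDerivAt L D x) (hL : fderiv ℝ G =ᶠ[𝓝 x] L) (v w : E) :
    |fderiv ℝ (fun y => fderiv ℝ G y v) x w| ≤ ‖D‖ * ‖w‖ * ‖v‖ := by
  have hDv : HasFDerivAt (fun y => fderiv ℝ G y v) (D.flip v) x := by
    have := hD.clm_apply (hasFDerivAt_const v x)
    rw [comp_zero, zero_add] at this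
    exact this.congr_of_eventuallyEq (hL.mono fun y hy => DFunLike.congr_fun hy v)
  rw [hDv.fderiv, flip_apply]
  exact le_opNorm₂ D w v

end SecondOrder

theorem IsCompact.exists_pos_forall_abs_le_and {s : Set ℝ} (hs : IsCompact s) {u v : ℝ → ℝ}
    (hu : Continuous u) (hv : Continuous v) :
    ∃ M, 0 < M ∧ ∀ t ∈ s, |u t| ≤ M ∧ |v t| ≤ M := by
  obtain ⟨C, hC⟩ := hs.exists_bound_of_continuousOn (hu.prodMk hv).continuousOn
  refine ⟨max C 1, by positivity, fun t ht => ?_⟩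
  exact norm_prod_le_iff.mp ((hC t ht).trans (le_max_left C 1))

theorem sqrt_sq_add_sq_le {a b R : ℝ} (ha : |a| ≤ R) (hb : |b| ≤ R) :
    √(a ^ 2 + b ^ 2) ≤ 2 * R := by
  have ha2 := sq_le_sq' (abs_le.mp ha).1 (abs_le.mp ha).2
  have hb2 := sq_le_sq' (abs_le.mp hb).1 (abs_le.mp hb).2
  exact Real.sqrt_le_iff.mpr ⟨by linarith [abs_nonneg a], by nlinarith⟩

theorem sqrt_sq_add_sq_add_sq_add_sq_le {a b c d R : ℝ} (ha : |a| ≤ R) (hb : |b| ≤ R)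
    (hc : |c| ≤ R) (hd : |d| ≤ R) : √(a ^ 2 + b ^ 2 + c ^ 2 + d ^ 2) ≤ 2 * R := by
  have ha2 := sq_le_sq' (abs_le.mp ha).1 (abs_le.mp ha).2
  have hb2 := sq_le_sq' (abs_le.mp hb).1 (abs_le.mp hb).2
  have hc2 := sq_le_sq' (abs_le.mp hc).1 (abs_le.mp hc).2
  have hd2 := sq_le_sq' (abs_le.mp hd).1 (abs_le.mp hd).2
  exact Real.sqrt_le_iff.mpr ⟨by linarith [abs_nonneg a], by nlinarith⟩

theorem abs_le_mul_div_of_abs_mul_le {a f γ K : ℝ} (hf : 0 < f) (hγ : 0 ≤ γ) (hK : 1 ≤ K)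
    (h : |a * f| ≤ γ) : |a| ≤ γ * (K / f) := by
  rw [abs_mul, abs_of_pos hf] at h
  rw [mul_div_assoc', le_div_iff₀ hf]
  nlinarith

theorem inv_le_of_log_sub_log {a c ε : ℝ} (hε : 0 < ε) (ha : 0 < a) (hac : a ≤ c)
    (h : 0 ≤ 1 + ε * (Real.log a - Real.log c)) :
    a⁻¹ ≤ 4 * Real.exp ε⁻¹ / (2 * (a + c)) ∧ c⁻¹ ≤ 4 * Real.exp ε⁻¹ / (2 * (a + c)) := by
  have hc : 0 < c := ha.trans_le hac
  have hlog : Real.log c - Real.log a ≤ ε⁻¹ := by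
    rw [← one_div, le_div_iff₀ hε]
    linarith
  have hcE : c ≤ Real.exp ε⁻¹ * a := by
    calc c = Real.exp (Real.log c) := (Real.exp_log hc).symm
      _ ≤ Real.exp (ε⁻¹ + Real.log a) := Real.exp_le_exp.mpr (by linarith)
      _ = Real.exp ε⁻¹ * a := by rw [Real.exp_add, Real.exp_log ha]
  have hE : 1 ≤ Real.exp ε⁻¹ := Real.one_le_exp (by positivity)
  set E := Real.exp ε⁻¹
  have key (t : ℝ) (ht : 0 < t) (h : 2 * (a + c) ≤ 4 * E * t) :
      t⁻¹ ≤ 4 * E / (2 * (a + c)) := by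
    rw [inv_eq_one_div, div_le_div_iff₀ ht (by positivity)]
    linarith
  exact ⟨key a ha (by linarith), key c hc (by nlinarith)⟩

section Gap

variable {h k : ℝ → ℝ} {x : ℝ × ℝ} {ε B r γ : ℝ}

def gap (h : ℝ → ℝ) (x : ℝ × ℝ) : ℝ := h x.1 - x.2

noncomputable def gapDeriv (h : ℝ → ℝ) (x : ℝ × ℝ) : ℝ × ℝ →L[ℝ] ℝ :=
  deriv h x.1 • fst ℝ ℝ ℝ - snd ℝ ℝ ℝ

noncomputable def gradLogGap (h : ℝ → ℝ) (x : ℝ × ℝ) : ℝ × ℝ →L[ℝ] ℝ :=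
  (gap h x)⁻¹ • gapDeriv h x

theorem hasFDerivAt_gap (hh : DifferentiableAt ℝ h x.1) :
    HasFDerivAt (gap h) (gapDeriv h x) x :=
  (hh.hasDerivAt.comp_hasFDerivAt x hasFDerivAt_fst).sub hasFDerivAt_snd

theorem norm_gapDeriv_le : ‖gapDeriv h x‖ ≤ |deriv h x.1| + 1 := by
  refine (norm_sub_le _ _).trans (add_le_add ?_ (norm_snd_le ℝ ℝ ℝ))
  rw [norm_smul, Real.norm_eq_abs]
  exact mul_le_of_le_one_right (abs_nonneg _) (norm_fst_le ℝ ℝ ℝ)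

theorem exists_hasFDerivAt_gapDeriv (hh : DifferentiableAt ℝ (deriv h) x.1) :
    ∃ D : ℝ × ℝ →L[ℝ] ℝ × ℝ →L[ℝ] ℝ, HasFDerivAt (gapDeriv h) D x ∧
      ‖D‖ ≤ |deriv (deriv h) x.1| := by
  refine ⟨_, ((hh.hasDerivAt.comp_hasFDerivAt x hasFDerivAt_fst).smul_const
    (fst ℝ ℝ ℝ)).sub_const (snd ℝ ℝ ℝ), ?_⟩
  rw [norm_smulRight_apply, norm_smul, Real.norm_eq_abs, mul_assoc]
  exact mul_le_of_le_one_right (abs_nonneg _)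
    (mul_le_one₀ (norm_fst_le ℝ ℝ ℝ) (norm_nonneg _) (norm_fst_le ℝ ℝ ℝ))

theorem hasFDerivAt_log_gap (hh : DifferentiableAt ℝ h x.1) (hx : gap h x ≠ 0) :
    HasFDerivAt (fun y => Real.log (gap h y)) (gradLogGap h x) x :=
  (Real.hasDerivAt_log hx).comp_hasFDerivAt x (hasFDerivAt_gap hh)

theorem norm_gradLogGap_le (hB : |deriv h x.1| + 1 ≤ B) (hr : |gap h x|⁻¹ ≤ r) :
    ‖gradLogGap h x‖ ≤ B * r := by
  rw [gradLogGap, norm_smul, norm_inv, Real.norm_eq_abs, mul_comm]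
  exact mul_le_mul (norm_gapDeriv_le.trans hB) hr (by positivity)
    (by linarith [abs_nonneg (deriv h x.1)])

theorem exists_hasFDerivAt_gradLogGap (hh : DifferentiableAt ℝ h x.1)
    (hh' : DifferentiableAt ℝ (deriv h) x.1) (hx : gap h x ≠ 0)
    (hB : |deriv h x.1| + 1 ≤ B) (hr : |gap h x|⁻¹ ≤ r) (hγ : |deriv (deriv h) x.1| ≤ γ * r) :
    ∃ D : ℝ × ℝ →L[ℝ] ℝ × ℝ →L[ℝ] ℝ, HasFDerivAt (gradLogGap h) D x ∧
      ‖D‖ ≤ (γ + B ^ 2) * r ^ 2 := by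
  obtain ⟨D₁, hD₁, hD₁le⟩ := exists_hasFDerivAt_gapDeriv hh'
  have hinv := (hasDerivAt_inv hx).comp_hasFDerivAt x (hasFDerivAt_gap hh)
  obtain ⟨D, hD, hDle⟩ := hinv.exists_smul_norm_le hD₁
  refine ⟨D, hD, hDle.trans ?_⟩
  rw [norm_smul, norm_neg, norm_inv, norm_pow, Real.norm_eq_abs, ← inv_pow,
    Function.comp_apply, abs_inv]
  have hr0 : 0 ≤ r := (inv_nonneg.mpr (abs_nonneg _)).trans hr
  have hB0 : 0 ≤ B := by linarith [abs_nonneg (deriv h x.1)]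
  have hgB : ‖gapDeriv h x‖ ≤ B := norm_gapDeriv_le.trans hB
  calc |gap h x|⁻¹ * ‖D₁‖ + |gap h x|⁻¹ ^ 2 * ‖gapDeriv h x‖ * ‖gapDeriv h x‖
      ≤ r * (γ * r) + r ^ 2 * B * B := by gcongr; exact hD₁le.trans hγ
    _ = (γ + B ^ 2) * r ^ 2 := by ring

end Gap

section Phase

variable {h k : ℝ → ℝ} {x : ℝ × ℝ} {ε B r γ : ℝ}

/-- For `k = midline f₁ f₂` the gap is negative above the midline; `Real.log` is even, so
`phase f₂ k ε` is there the argument `1 + ε ln ((f₂ - x₂) / (x₂ - f̄))` of `μ` in `Gfun`. -/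
noncomputable def phase (h k : ℝ → ℝ) (ε : ℝ) (x : ℝ × ℝ) : ℝ :=
  1 + ε * (Real.log (gap h x) - Real.log (gap k x))

noncomputable def gradPhase (h k : ℝ → ℝ) (ε : ℝ) (x : ℝ × ℝ) : ℝ × ℝ →L[ℝ] ℝ :=
  ε • (gradLogGap h x - gradLogGap k x)

theorem hasFDerivAt_phase (hh : DifferentiableAt ℝ h x.1) (hk : DifferentiableAt ℝ k x.1)
    (hxh : gap h x ≠ 0) (hxk : gap k x ≠ 0) :
    HasFDerivAt (phase h k ε) (gradPhase h k ε x) x :=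
  (((hasFDerivAt_log_gap hh hxh).sub (hasFDerivAt_log_gap hk hxk)).const_mul ε).const_add 1

theorem norm_gradPhase_le (hε : 0 ≤ ε) (hBh : |deriv h x.1| + 1 ≤ B)
    (hBk : |deriv k x.1| + 1 ≤ B) (hrh : |gap h x|⁻¹ ≤ r) (hrk : |gap k x|⁻¹ ≤ r) :
    ‖gradPhase h k ε x‖ ≤ 2 * ε * B * r := by
  rw [gradPhase, norm_smul, Real.norm_eq_abs, abs_of_nonneg hε]
  have := (norm_sub_le _ _).trans
    (add_le_add (norm_gradLogGap_le hBh hrh) (norm_gradLogGap_le hBk hrk))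
  nlinarith

theorem exists_hasFDerivAt_gradPhase (hε : 0 ≤ ε) (hh : DifferentiableAt ℝ h x.1)
    (hh' : DifferentiableAt ℝ (deriv h) x.1) (hk : DifferentiableAt ℝ k x.1)
    (hk' : DifferentiableAt ℝ (deriv k) x.1) (hxh : gap h x ≠ 0) (hxk : gap k x ≠ 0)
    (hBh : |deriv h x.1| + 1 ≤ B) (hBk : |deriv k x.1| + 1 ≤ B)
    (hrh : |gap h x|⁻¹ ≤ r) (hrk : |gap k x|⁻¹ ≤ r)
    (hγh : |deriv (deriv h) x.1| ≤ γ * r) (hγk : |deriv (deriv k) x.1| ≤ γ * r) :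
    ∃ D : ℝ × ℝ →L[ℝ] ℝ × ℝ →L[ℝ] ℝ, HasFDerivAt (gradPhase h k ε) D x ∧
      ‖D‖ ≤ 2 * ε * (γ + B ^ 2) * r ^ 2 := by
  obtain ⟨Dh, hDh, hDhle⟩ := exists_hasFDerivAt_gradLogGap hh hh' hxh hBh hrh hγh
  obtain ⟨Dk, hDk, hDkle⟩ := exists_hasFDerivAt_gradLogGap hk hk' hxk hBk hrk hγk
  refine ⟨ε • (Dh - Dk), (hDh.sub hDk).const_smul ε, (opNorm_smul_le _ _).trans ?_⟩
  rw [Real.norm_eq_abs, abs_of_nonneg hε]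
  have := (norm_sub_le Dh Dk).trans (add_le_add hDhle hDkle)
  nlinarith

end Phase

section Channel

variable {μ f₁ f₂ u v : ℝ → ℝ} {ε Φ : ℝ} {x : ℝ × ℝ}

noncomputable def midline (f₁ f₂ : ℝ → ℝ) (t : ℝ) : ℝ := (f₁ t + f₂ t) / 2

theorem differentiable_midline (h₁ : Differentiable ℝ f₁) (h₂ : Differentiable ℝ f₂) :
    Differentiable ℝ (midline f₁ f₂) :=
  (h₁.add h₂).div_const 2

theorem deriv_midline (h₁ : Differentiable ℝ f₁) (h₂ : Differentiable ℝ f₂) :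
    deriv (midline f₁ f₂) = midline (deriv f₁) (deriv f₂) :=
  funext fun t => (((h₁ t).hasDerivAt.add (h₂ t).hasDerivAt).div_const 2).deriv

theorem abs_midline_le {t c : ℝ} (hu : |u t| ≤ c) (hv : |v t| ≤ c) : |midline u v t| ≤ c := by
  rw [midline, abs_div, abs_two]
  linarith [abs_add_le (u t) (v t)]

theorem eventually_midline_lt_lt (hf₁ : Continuous f₁) (hf₂ : Continuous f₂)
    (hx₁ : midline f₁ f₂ x.1 < x.2) (hx₂ : x.2 < f₂ x.1) :
    ∀ᶠ y in 𝓝 x, midline f₁ f₂ y.1 < y.2 ∧ y.2 < f₂ y.1 := by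
  have hm : Continuous (midline f₁ f₂) := (hf₁.add hf₂).div_const 2
  exact ((hm.comp continuous_fst).continuousAt.eventually_lt continuous_snd.continuousAt hx₁).and
    (continuous_snd.continuousAt.eventually_lt (hf₂.comp continuous_fst).continuousAt hx₂)

theorem Gfun_eq_of_midline_lt_lt {y : ℝ × ℝ} (hy₁ : midline f₁ f₂ y.1 < y.2)
    (hy₂ : y.2 < f₂ y.1) : Gfun μ f₁ f₂ ε Φ y = Φ * μ (phase f₂ (midline f₁ f₂) ε y) := by
  simp only [Gfun, phase, gap, midline] at hy₁ ⊢
  rw [if_pos hy₁, Real.log_div (sub_pos.mpr hy₂).ne' (sub_pos.mpr hy₁).ne',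
    ← Real.log_neg_eq_log ((f₁ y.1 + f₂ y.1) / 2 - y.2), neg_sub]

theorem Gfun_eventuallyEq_zero (hε : 0 ≤ ε) (hμ₀ : ∀ t, 1 ≤ t → μ t = 0)
    (hf₁ : Continuous f₁) (hf₂ : Continuous f₂)
    (hx : x.2 - midline f₁ f₂ x.1 < f₂ x.1 - x.2) :
    Gfun μ f₁ f₂ ε Φ =ᶠ[𝓝 x] fun _ => 0 := by
  have hm : Continuous (midline f₁ f₂) := (hf₁.add hf₂).div_const 2
  have hcont : Continuous fun y : ℝ × ℝ => f₂ y.1 - y.2 - (y.2 - midline f₁ f₂ y.1) := by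
    fun_prop
  filter_upwards [continuousAt_const.eventually_lt hcont.continuousAt (sub_pos.mpr hx)]
    with y hy
  rw [Gfun]
  split_ifs with hy₁
  · have hlog : 0 < Real.log ((f₂ y.1 - y.2) / (y.2 - (f₁ y.1 + f₂ y.1) / 2)) :=
      Real.log_pos ((one_lt_div (sub_pos.mpr hy₁)).mpr (sub_pos.mp hy))
    rw [hμ₀ _ (by nlinarith), mul_zero]
  · rfl

theorem hasFDerivAt_Gfun (hμ : Differentiable ℝ μ) (hf₁ : Differentiable ℝ f₁)
    (hf₂ : Differentiable ℝ f₂) (hx₁ : midline f₁ f₂ x.1 < x.2) (hx₂ : x.2 < f₂ x.1) :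
    HasFDerivAt (Gfun μ f₁ f₂ ε Φ)
      (Φ • deriv μ (phase f₂ (midline f₁ f₂) ε x) • gradPhase f₂ (midline f₁ f₂) ε x) x := by
  have hφ := hasFDerivAt_phase (ε := ε) (hf₂ x.1) (differentiable_midline hf₁ hf₂ x.1)
    (sub_pos.mpr hx₂).ne' (sub_neg.mpr hx₁).ne
  refine (((hμ _).hasDerivAt.comp_hasFDerivAt x hφ).const_mul Φ).congr_of_eventuallyEq ?_
  filter_upwards [eventually_midline_lt_lt hf₁.continuous hf₂.continuous hx₁ hx₂] with y hy
  exact Gfun_eq_of_midline_lt_lt hy.1 hy.2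

theorem Gfun_eventuallyEq_of_phase_neg (hμ₁ : ∀ t, t ≤ 0 → μ t = 1)
    (hf₁ : Differentiable ℝ f₁) (hf₂ : Differentiable ℝ f₂) (hx₁ : midline f₁ f₂ x.1 < x.2)
    (hx₂ : x.2 < f₂ x.1) (hφ : phase f₂ (midline f₁ f₂) ε x < 0) :
    Gfun μ f₁ f₂ ε Φ =ᶠ[𝓝 x] fun _ => Φ := by
  have hφc := (hasFDerivAt_phase (ε := ε) (hf₂ x.1) (differentiable_midline hf₁ hf₂ x.1)
    (sub_pos.mpr hx₂).ne' (sub_neg.mpr hx₁).ne).continuousAt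
  filter_upwards [eventually_midline_lt_lt hf₁.continuous hf₂.continuous hx₁ hx₂,
    hφc.eventually_lt continuousAt_const hφ] with y hy hyφ
  rw [Gfun_eq_of_midline_lt_lt hy.1 hy.2, hμ₁ _ hyφ.le, mul_one]

theorem phase_le_one (hε : 0 ≤ ε) (hx₂ : x.2 < f₂ x.1)
    (hV : f₂ x.1 - x.2 ≤ x.2 - midline f₁ f₂ x.1) : phase f₂ (midline f₁ f₂) ε x ≤ 1 := by
  have hc : gap (midline f₁ f₂) x = -(x.2 - midline f₁ f₂ x.1) := (neg_sub _ _).symm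
  have hlog := Real.log_le_log (sub_pos.mpr hx₂) hV
  rw [phase, hc, Real.log_neg_eq_log, gap]
  nlinarith [mul_nonneg hε (sub_nonneg.mpr hlog)]

theorem inv_abs_gap_le_of_phase_nonneg (hε : 0 < ε) (hx₂ : x.2 < f₂ x.1)
    (hV : f₂ x.1 - x.2 ≤ x.2 - midline f₁ f₂ x.1) (hφ : 0 ≤ phase f₂ (midline f₁ f₂) ε x) :
    |gap f₂ x|⁻¹ ≤ 4 * Real.exp ε⁻¹ / (f₂ x.1 - f₁ x.1) ∧
      |gap (midline f₁ f₂) x|⁻¹ ≤ 4 * Real.exp ε⁻¹ / (f₂ x.1 - f₁ x.1) := by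
  have ha : 0 < gap f₂ x := sub_pos.mpr hx₂
  have hc : gap (midline f₁ f₂) x = -(x.2 - midline f₁ f₂ x.1) := (neg_sub _ _).symm
  have hsum : 2 * (gap f₂ x + (x.2 - midline f₁ f₂ x.1)) = f₂ x.1 - f₁ x.1 := by
    simp only [gap, midline]; ring
  rw [phase, hc, Real.log_neg_eq_log] at hφ
  rw [hc, abs_neg, abs_of_pos ha, abs_of_pos (ha.trans_le hV), ← hsum]
  exact inv_le_of_log_sub_log hε ha hV hφ

end Channel

section FluxCarrier

variable {μ f₁ f₂ : ℝ → ℝ} {ε Φ M β γ r c R₁ R₂ : ℝ} {x : ℝ × ℝ}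

theorem flux_carrier_bounds {L : ℝ × ℝ → ℝ × ℝ →L[ℝ] ℝ} {D : ℝ × ℝ →L[ℝ] ℝ × ℝ →L[ℝ] ℝ}
    (hL : fderiv ℝ (Gfun μ f₁ f₂ ε Φ) =ᶠ[𝓝 x] L) (hD : HasFDerivAt L D x)
    (hL₁ : ‖L x‖ ≤ R₁) (hD₂ : ‖D‖ ≤ R₂) :
    √(gfun₁ μ f₁ f₂ ε Φ x ^ 2 + gfun₂ μ f₁ f₂ ε Φ x ^ 2) ≤ 2 * R₁ ∧
      √(fderiv ℝ (gfun₁ μ f₁ f₂ ε Φ) x (1, 0) ^ 2 + fderiv ℝ (gfun₁ μ f₁ f₂ ε Φ) x (0, 1) ^ 2 +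
        fderiv ℝ (gfun₂ μ f₁ f₂ ε Φ) x (1, 0) ^ 2 + fderiv ℝ (gfun₂ μ f₁ f₂ ε Φ) x (0, 1) ^ 2)
        ≤ 2 * R₂ := by
  have hunit : ‖((1 : ℝ), (0 : ℝ))‖ = 1 ∧ ‖((0 : ℝ), (1 : ℝ))‖ = 1 := by simp
  have hg (v : ℝ × ℝ) (hv : ‖v‖ = 1) : |fderiv ℝ (Gfun μ f₁ f₂ ε Φ) x v| ≤ R₁ := by
    rw [hL.eq_of_nhds, ← Real.norm_eq_abs]
    exact ((L x).le_opNorm v).trans (by rw [hv, mul_one]; exact hL₁)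
  have hdg (v w : ℝ × ℝ) (hv : ‖v‖ = 1) (hw : ‖w‖ = 1) :
      |fderiv ℝ (fun y => fderiv ℝ (Gfun μ f₁ f₂ ε Φ) y v) x w| ≤ R₂ :=
    (hD.abs_fderiv_apply_le hL v w).trans (by rw [hv, hw, mul_one, mul_one]; exact hD₂)
  have hneg : fderiv ℝ (gfun₂ μ f₁ f₂ ε Φ) x =
      -fderiv ℝ (fun y => fderiv ℝ (Gfun μ f₁ f₂ ε Φ) y (1, 0)) x :=
    fderiv_fun_neg
  rw [hneg, gfun₂, gfun₁, neg_sq]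
  simp only [neg_apply, neg_sq]
  exact ⟨sqrt_sq_add_sq_le (hg _ hunit.2) (hg _ hunit.1),
    sqrt_sq_add_sq_add_sq_add_sq_le (hdg _ _ hunit.2 hunit.1) (hdg _ _ hunit.2 hunit.2)
      (hdg _ _ hunit.1 hunit.1) (hdg _ _ hunit.1 hunit.2)⟩

theorem flux_carrier_bounds_of_eventuallyEq_const (hG : Gfun μ f₁ f₂ ε Φ =ᶠ[𝓝 x] fun _ => c)
    (hR₁ : 0 ≤ R₁) (hR₂ : 0 ≤ R₂) :
    √(gfun₁ μ f₁ f₂ ε Φ x ^ 2 + gfun₂ μ f₁ f₂ ε Φ x ^ 2) ≤ R₁ ∧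
      √(fderiv ℝ (gfun₁ μ f₁ f₂ ε Φ) x (1, 0) ^ 2 + fderiv ℝ (gfun₁ μ f₁ f₂ ε Φ) x (0, 1) ^ 2 +
        fderiv ℝ (gfun₂ μ f₁ f₂ ε Φ) x (1, 0) ^ 2 + fderiv ℝ (gfun₂ μ f₁ f₂ ε Φ) x (0, 1) ^ 2)
        ≤ R₂ := by
  have hL : fderiv ℝ (Gfun μ f₁ f₂ ε Φ) =ᶠ[𝓝 x] 0 := by
    simpa using hG.fderiv
  obtain ⟨h₁, h₂⟩ := flux_carrier_bounds (R₁ := 0) (R₂ := 0) hL (hasFDerivAt_const 0 x)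
    (by rw [Pi.zero_apply, norm_zero]) opNorm_zero.le
  exact ⟨by linarith, by linarith⟩

theorem flux_carrier_bounds_of_inv_abs_gap_le (hμ : Differentiable ℝ μ)
    (hμ' : Differentiable ℝ (deriv μ)) (hf₁ : Differentiable ℝ f₁) (hf₂ : Differentiable ℝ f₂)
    (hf₁' : Differentiable ℝ (deriv f₁)) (hf₂' : Differentiable ℝ (deriv f₂))
    (hε : 0 ≤ ε) (hΦ : 0 ≤ Φ) (hx₁ : midline f₁ f₂ x.1 < x.2) (hx₂ : x.2 < f₂ x.1)
    (hM₁ : |deriv μ (phase f₂ (midline f₁ f₂) ε x)| ≤ M)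
    (hM₂ : |deriv (deriv μ) (phase f₂ (midline f₁ f₂) ε x)| ≤ M)
    (hβ₁ : |deriv f₁ x.1| ≤ β) (hβ₂ : |deriv f₂ x.1| ≤ β)
    (hγ₁ : |deriv (deriv f₁) x.1| ≤ γ * r) (hγ₂ : |deriv (deriv f₂) x.1| ≤ γ * r)
    (hr₂ : |gap f₂ x|⁻¹ ≤ r) (hrm : |gap (midline f₁ f₂) x|⁻¹ ≤ r) :
    √(gfun₁ μ f₁ f₂ ε Φ x ^ 2 + gfun₂ μ f₁ f₂ ε Φ x ^ 2) ≤
        2 * (Φ * (M * (2 * ε * (β + 1) * r))) ∧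
      √(fderiv ℝ (gfun₁ μ f₁ f₂ ε Φ) x (1, 0) ^ 2 + fderiv ℝ (gfun₁ μ f₁ f₂ ε Φ) x (0, 1) ^ 2 +
        fderiv ℝ (gfun₂ μ f₁ f₂ ε Φ) x (1, 0) ^ 2 + fderiv ℝ (gfun₂ μ f₁ f₂ ε Φ) x (0, 1) ^ 2)
        ≤ 2 * (Φ * (M * (2 * ε * (β + 1) * r) ^ 2 +
          M * (2 * ε * (γ + (β + 1) ^ 2) * r ^ 2))) := by
  have hM : 0 ≤ M := (abs_nonneg _).trans hM₁
  set m := midline f₁ f₂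
  have hm := differentiable_midline hf₁ hf₂
  have hm' : Differentiable ℝ (deriv m) := by
    rw [deriv_midline hf₁ hf₂]; exact differentiable_midline hf₁' hf₂'
  have hBm : |deriv m x.1| + 1 ≤ β + 1 := by
    rw [deriv_midline hf₁ hf₂]; linarith [abs_midline_le hβ₁ hβ₂]
  have hγm : |deriv (deriv m) x.1| ≤ γ * r := by
    rw [deriv_midline hf₁ hf₂, deriv_midline hf₁' hf₂']; exact abs_midline_le hγ₁ hγ₂
  have hgap₂ : gap f₂ x ≠ 0 := (sub_pos.mpr hx₂).ne'
  have hgapm : gap m x ≠ 0 := (sub_neg.mpr hx₁).ne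
  have hDφ := norm_gradPhase_le hε (by linarith) hBm hr₂ hrm
  obtain ⟨D, hD, hDle⟩ := exists_hasFDerivAt_gradPhase hε (hf₂ _) (hf₂' _) (hm _) (hm' _)
    hgap₂ hgapm (by linarith) hBm hr₂ hrm hγ₂ hγm
  obtain ⟨D', hD', hD'le⟩ :=
    (hasFDerivAt_phase (hf₂ _) (hm _) hgap₂ hgapm).exists_deriv_comp_smul_norm_le (hμ' _) hD
  refine flux_carrier_bounds
    (L := fun y => Φ • deriv μ (phase f₂ m ε y) • gradPhase f₂ m ε y) ?_
    (hD'.const_smul Φ) ?_ ?_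
  · filter_upwards [eventually_midline_lt_lt hf₁.continuous hf₂.continuous hx₁ hx₂] with y hy
    exact (hasFDerivAt_Gfun hμ hf₁ hf₂ hy.1 hy.2).fderiv
  · rw [norm_smul, norm_smul, Real.norm_eq_abs, Real.norm_eq_abs, abs_of_nonneg hΦ]
    gcongr
  · refine (opNorm_smul_le _ _).trans ?_
    rw [Real.norm_eq_abs, abs_of_nonneg hΦ]
    gcongr
    refine hD'le.trans ?_
    gcongr

end FluxCarrier

theorem stmt_11_general (μ : ℝ → ℝ)
    (hμsmooth : ContDiff ℝ (⊤ : ℕ∞) μ)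
    (hμ₁ : ∀ t : ℝ, t ≤ 0 → μ t = 1) (hμ₀ : ∀ t : ℝ, 1 ≤ t → μ t = 0)
    (β : ℝ) (ε : ℝ) (hε : ε ∈ Ioo (0 : ℝ) 1) (γ : ℝ) (hγ : 0 ≤ γ) :
    ∃ C Cγ : ℝ, 0 < C ∧ 0 < Cγ ∧
      ∀ (f₁ f₂ : ℝ → ℝ) (d Φ : ℝ),
        ContDiff ℝ (⊤ : ℕ∞) f₁ → ContDiff ℝ (⊤ : ℕ∞) f₂ →
        0 < d → (∀ x₁ : ℝ, d ≤ f₂ x₁ - f₁ x₁) →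
        (∀ x₁ : ℝ, |deriv f₁ x₁| ≤ β) → (∀ x₁ : ℝ, |deriv f₂ x₁| ≤ β) →
        (∀ x₁ : ℝ, |deriv (deriv f₁) x₁ * (f₂ x₁ - f₁ x₁)| ≤ γ) →
        (∀ x₁ : ℝ, |deriv (deriv f₂) x₁ * (f₂ x₁ - f₁ x₁)| ≤ γ) →
        0 ≤ Φ →
        ∀ x ∈ channel f₁ f₂,
          Real.sqrt ((gfun₁ μ f₁ f₂ ε Φ x) ^ 2 + (gfun₂ μ f₁ f₂ ε Φ x) ^ 2) ≤
            C * Φ / (f₂ x.1 - f₁ x.1) ∧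
          Real.sqrt ((fderiv ℝ (gfun₁ μ f₁ f₂ ε Φ) x (1, 0)) ^ 2 +
              (fderiv ℝ (gfun₁ μ f₁ f₂ ε Φ) x (0, 1)) ^ 2 +
              (fderiv ℝ (gfun₂ μ f₁ f₂ ε Φ) x (1, 0)) ^ 2 +
              (fderiv ℝ (gfun₂ μ f₁ f₂ ε Φ) x (0, 1)) ^ 2) ≤
            Cγ * Φ / (f₂ x.1 - f₁ x.1) ^ 2 := by
  obtain ⟨hε, -⟩ := hε
  obtain ⟨hμ, hμ'⟩ := contDiff_infty_iff_deriv.mp hμsmooth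
  obtain ⟨hμ'd, hμ''⟩ := contDiff_infty_iff_deriv.mp hμ'
  obtain ⟨M, hM, hMb⟩ := isCompact_Icc.exists_pos_forall_abs_le_and hμ'.continuous
    hμ''.continuous
  set K := 4 * Real.exp ε⁻¹
  have hK : 1 ≤ K := by linarith [Real.one_le_exp (inv_pos.mpr hε).le]
  refine ⟨2 * (M * (2 * ε * (|β| + 1) * K)),
    2 * (M * (2 * ε * (|β| + 1) * K) ^ 2 + M * (2 * ε * (γ + (|β| + 1) ^ 2) * K ^ 2)),
    by positivity, by positivity, ?_⟩
  intro f₁ f₂ d Φ hf₁ hf₂ _ _ hβ₁ hβ₂ hγ₁ hγ₂ hΦ x hx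
  obtain ⟨hf₁d, hf₁'⟩ := contDiff_infty_iff_deriv.mp hf₁
  obtain ⟨hf₂d, hf₂'⟩ := contDiff_infty_iff_deriv.mp hf₂
  have hf : 0 < f₂ x.1 - f₁ x.1 := by linarith [hx.1, hx.2]
  by_cases hV : x.2 - midline f₁ f₂ x.1 < f₂ x.1 - x.2
  · exact flux_carrier_bounds_of_eventuallyEq_const (Gfun_eventuallyEq_zero hε.le hμ₀
      hf₁d.continuous hf₂d.continuous hV) (div_nonneg (by positivity) hf.le) (by positivity)
  rw [not_lt] at hV
  have hx₁ : midline f₁ f₂ x.1 < x.2 := by have := hx.2; simp only [midline] at hV ⊢; linarith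
  by_cases hφ : phase f₂ (midline f₁ f₂) ε x < 0
  · exact flux_carrier_bounds_of_eventuallyEq_const (Gfun_eventuallyEq_of_phase_neg hμ₁ hf₁d
      hf₂d hx₁ hx.2 hφ) (div_nonneg (by positivity) hf.le) (by positivity)
  rw [not_lt] at hφ
  have hφM := hMb _ ⟨hφ, phase_le_one hε.le hx.2 hV⟩
  obtain ⟨hr₂, hrm⟩ := inv_abs_gap_le_of_phase_nonneg hε hx.2 hV hφ
  obtain ⟨h₁, h₂⟩ := flux_carrier_bounds_of_inv_abs_gap_le hμ hμ'd hf₁d hf₂d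
    (hf₁'.differentiable (by simp)) (hf₂'.differentiable (by simp)) hε.le hΦ hx₁ hx.2 hφM.1
    hφM.2 ((hβ₁ x.1).trans (le_abs_self β)) ((hβ₂ x.1).trans (le_abs_self β))
    (abs_le_mul_div_of_abs_mul_le hf hγ hK (hγ₁ x.1))
    (abs_le_mul_div_of_abs_mul_le hf hγ hK (hγ₂ x.1)) hr₂ hrm
  generalize f₂ x.1 - f₁ x.1 = w at h₁ h₂ ⊢
  exact ⟨h₁.trans_eq (by ring), h₂.trans_eq (by ring)⟩

/-- the pointwise bounds `|g| ≤ C(ε) Φ / f(x₁)` and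
`|∇g| ≤ C(ε,γ) Φ / f(x₁)²` on `Ω`, under the additional assumption
`max_i sup |f_i'' f| ≤ γ < ∞`. -/
theorem stmt_11 (μ : ℝ → ℝ)
    (hμsmooth : ContDiff ℝ (⊤ : ℕ∞) μ) (hμanti : Antitone μ)
    (hμ₁ : ∀ t : ℝ, t ≤ 0 → μ t = 1) (hμ₀ : ∀ t : ℝ, 1 ≤ t → μ t = 0)
    (β : ℝ) (ε : ℝ) (hε : ε ∈ Ioo (0 : ℝ) 1) (γ : ℝ) (hγ : 0 ≤ γ) :
    ∃ C Cγ : ℝ, 0 < C ∧ 0 < Cγ ∧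
      ∀ (f₁ f₂ : ℝ → ℝ) (d Φ : ℝ),
        ContDiff ℝ (⊤ : ℕ∞) f₁ → ContDiff ℝ (⊤ : ℕ∞) f₂ →
        0 < d → (∀ x₁ : ℝ, d ≤ f₂ x₁ - f₁ x₁) →
        (∀ x₁ : ℝ, |deriv f₁ x₁| ≤ β) → (∀ x₁ : ℝ, |deriv f₂ x₁| ≤ β) →
        (∀ x₁ : ℝ, |deriv (deriv f₁) x₁ * (f₂ x₁ - f₁ x₁)| ≤ γ) →
        (∀ x₁ : ℝ, |deriv (deriv f₂) x₁ * (f₂ x₁ - f₁ x₁)| ≤ γ) →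
        0 ≤ Φ →
        ∀ x ∈ channel f₁ f₂,
          Real.sqrt ((gfun₁ μ f₁ f₂ ε Φ x) ^ 2 + (gfun₂ μ f₁ f₂ ε Φ x) ^ 2) ≤
            C * Φ / (f₂ x.1 - f₁ x.1) ∧
          Real.sqrt ((fderiv ℝ (gfun₁ μ f₁ f₂ ε Φ) x (1, 0)) ^ 2 +
              (fderiv ℝ (gfun₁ μ f₁ f₂ ε Φ) x (0, 1)) ^ 2 +
              (fderiv ℝ (gfun₂ μ f₁ f₂ ε Φ) x (1, 0)) ^ 2 +
              (fderiv ℝ (gfun₂ μ f₁ f₂ ε Φ) x (0, 1)) ^ 2) ≤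
            Cγ * Φ / (f₂ x.1 - f₁ x.1) ^ 2 :=
  stmt_11_general μ hμsmooth hμ₁ hμ₀ β ε hε γ hγ
end

section
/- Let f : ℝ → ℝ be C¹ with f(t) ≥ d > 0 and |f'(t)| ≤ 2β for all t, and assume ∫_0^{+∞} f(ξ)^{−5/3} dξ = ∫_{−∞}^{0} f(ξ)^{−5/3} dξ = ∞. Let k(t) := ∫_0^t f(ξ)^{−5/3} dξ, let h : ℝ → ℝ be the inverse function of k, and with β* := (4β)^{−1} set h_L(t) := h(−t) + β* f(h(−t)) and h_R(t) := h(t) − β* f(h(t)). Then for every t ∈ ℝ: (d/dt) h_L(t) ≤ −d^{5/3}/2 and (d/dt) h_R(t) ≥ d^{5/3}/2. -/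
open MeasureTheory Set

/-!
Since `k' = f^{-5/3} > 0`, the inverse `h` is differentiable with `h' = f(h)^{5/3} ≥ d^{5/3}`.
By the chain rule `h_R' = h' (1 - β* f'(h))` and `h_L' = -h'(-t) (1 + β* f'(h(-t)))`,
and `|β* f'| ≤ 1/2` keeps both brackets above `1/2`.
-/

theorem hasDerivAt_rightInverse_of_deriv_pos {k k' h : ℝ → ℝ}
    (hk : ∀ x, HasDerivAt k (k' x) x) (hpos : ∀ x, 0 < k' x)
    (hkh : ∀ t, k (h t) = t) (t : ℝ) : HasDerivAt h (k' (h t))⁻¹ t := by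
  have hkmono : StrictMono k := strictMono_of_hasDerivAt_pos hk hpos
  have hhmono : Monotone h := fun a b hab => by
    rwa [← hkmono.le_iff_le, hkh, hkh]
  have hhsurj : Function.Surjective h := fun s => ⟨k s, hkmono.injective (hkh (k s))⟩
  exact .of_local_left_inverse (hhmono.continuous_of_surjective hhsurj).continuousAt (hk (h t))
    (hpos (h t)).ne' (Filter.Eventually.of_forall hkh)

theorem abs_inv_four_mul_mul_le_half {a b : ℝ} (hab : |a| ≤ 2 * b) :
    |(4 * b)⁻¹ * a| ≤ 1 / 2 := by
  rcases (abs_nonneg a |>.trans hab).eq_or_lt' with hb | hb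
  · simp [show b = 0 by linarith]
  · have h4b : (0 : ℝ) < 4 * b := by linarith
    rw [abs_mul, abs_inv, abs_of_pos h4b, inv_mul_le_iff₀ h4b]
    linarith

theorem half_le_mul_one_add {c H ε : ℝ} (hc : 0 ≤ c) (hcH : c ≤ H) (hε : |ε| ≤ 1 / 2) :
    c / 2 ≤ H * (1 + ε) := by
  have := (abs_le.mp hε).1
  nlinarith

theorem HasDerivAt.add_const_mul_comp {f h : ℝ → ℝ} {f' H t : ℝ} (c : ℝ)
    (hh : HasDerivAt h H t) (hf : HasDerivAt f f' (h t)) :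
    HasDerivAt (fun τ => h τ + c * f (h τ)) (H * (1 + c * f')) t :=
  (hh.add ((hf.comp t hh).const_mul c)).congr_deriv (by ring)

theorem stmt_16_general (f : ℝ → ℝ) (d β : ℝ)
    (hd : 0 < d) (hfd : ∀ t : ℝ, d ≤ f t)
    (hf : ContDiff ℝ 1 f)
    (hf' : ∀ t : ℝ, |deriv f t| ≤ 2 * β)
    (k h : ℝ → ℝ)
    (hk : ∀ t : ℝ, k t = ∫ ξ in (0 : ℝ)..t, (f ξ) ^ (-(5 : ℝ) / 3))
    -- `h` is the inverse function of `k`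
    (hinv₂ : ∀ t : ℝ, k (h t) = t) :
    ∀ t : ℝ,
      (∃ D : ℝ,
        HasDerivAt (fun τ : ℝ => h (-τ) + (4 * β)⁻¹ * f (h (-τ))) D t ∧
          D ≤ -(d ^ ((5 : ℝ) / 3)) / 2) ∧
      (∃ D : ℝ,
        HasDerivAt (fun τ : ℝ => h τ - (4 * β)⁻¹ * f (h τ)) D t ∧
          d ^ ((5 : ℝ) / 3) / 2 ≤ D) := by
  have hfpos : ∀ x, 0 < f x := fun x => hd.trans_le (hfd x)
  have hkd : ∀ x, HasDerivAt k (f x ^ (-(5 : ℝ) / 3)) x := fun x => by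
    rw [funext hk]
    exact ((hf.continuous.rpow_const fun y => .inl (hfpos y).ne').integral_hasStrictDerivAt
      0 x).hasDerivAt
  have hhd : ∀ s, HasDerivAt h (f (h s) ^ ((5 : ℝ) / 3)) s := fun s => by
    simpa [neg_div, Real.rpow_neg (hfpos _).le] using
      hasDerivAt_rightInverse_of_deriv_pos hkd (fun x => Real.rpow_pos_of_pos (hfpos x) _) hinv₂ s
  have hfdiff : ∀ x, DifferentiableAt ℝ f x := hf.differentiable one_ne_zero
  have hlow : ∀ x, d ^ ((5 : ℝ) / 3) ≤ f x ^ ((5 : ℝ) / 3) := fun x =>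
    Real.rpow_le_rpow hd.le (hfd x) (by norm_num)
  have hsmall : ∀ x, |(4 * β)⁻¹ * deriv f x| ≤ 1 / 2 := fun x =>
    abs_inv_four_mul_mul_le_half (hf' x)
  have hd53 : 0 ≤ d ^ ((5 : ℝ) / 3) := by positivity
  intro t
  constructor
  · refine ⟨_,
      ((hhd (-t)).add_const_mul_comp _ (hfdiff _).hasDerivAt).comp t (hasDerivAt_neg t), ?_⟩
    linarith [half_le_mul_one_add hd53 (hlow (h (-t))) (hsmall (h (-t)))]
  · refine ⟨_, ((hhd t).add_const_mul_comp (-(4 * β)⁻¹) (hfdiff _).hasDerivAt)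
      |>.congr_of_eventuallyEq (.of_forall fun τ => by ring), ?_⟩
    simpa [neg_mul] using
      half_le_mul_one_add hd53 (hlow (h t)) ((abs_neg _).trans_le (hsmall (h t)))

/-- with `k(t) = ∫_0^t f(ξ)^{−5/3} dξ` a bijection of `ℝ` (both improper
integrals diverge), `h = k⁻¹`, and `β* = (4β)⁻¹`, the functions
`h_L(t) = h(−t) + β* f(h(−t))` and `h_R(t) = h(t) − β* f(h(t))` satisfy
`h_L' ≤ −d^{5/3}/2` and `h_R' ≥ d^{5/3}/2`. -/
theorem stmt_16 (f : ℝ → ℝ) (d β : ℝ)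
    (hd : 0 < d) (hfd : ∀ t : ℝ, d ≤ f t)
    (hf : ContDiff ℝ 1 f)
    (hf' : ∀ t : ℝ, |deriv f t| ≤ 2 * β)
    -- divergence of both improper integrals of `f^{-5/3}`
    (hdivtop : ¬ IntegrableOn (fun ξ : ℝ => (f ξ) ^ (-(5 : ℝ) / 3)) (Ici 0))
    (hdivbot : ¬ IntegrableOn (fun ξ : ℝ => (f ξ) ^ (-(5 : ℝ) / 3)) (Iic 0))
    (k h : ℝ → ℝ)
    (hk : ∀ t : ℝ, k t = ∫ ξ in (0 : ℝ)..t, (f ξ) ^ (-(5 : ℝ) / 3))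
    -- `h` is the inverse function of `k`
    (hinv₁ : ∀ s : ℝ, h (k s) = s) (hinv₂ : ∀ t : ℝ, k (h t) = t) :
    ∀ t : ℝ,
      (∃ D : ℝ,
        HasDerivAt (fun τ : ℝ => h (-τ) + (4 * β)⁻¹ * f (h (-τ))) D t ∧
          D ≤ -(d ^ ((5 : ℝ) / 3)) / 2) ∧
      (∃ D : ℝ,
        HasDerivAt (fun τ : ℝ => h τ - (4 * β)⁻¹ * f (h τ)) D t ∧
          d ^ ((5 : ℝ) / 3) / 2 ≤ D) :=
  stmt_16_general f d β hd hfd hf hf' k h hk hinv₂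
end

section
/- Let f : ℝ → ℝ be continuous with f(t) ≥ d > 0 for all t, differentiable with |f'(t)| ≤ 2β for all t, and set β* := (4β)^{−1}. Then for every s ∈ ℝ: ∫_{s − β* f(s)}^{s} f(τ)^{−3} dτ ≤ 8 β* f(s)^{−2} ≤ 8 β* d^{−2}. -/
open Set

/-- with `β* = (4β)⁻¹`, one has
`∫_{s − β* f(s)}^{s} f(τ)^{−3} dτ ≤ 8 β* f(s)^{−2} ≤ 8 β* d^{−2}`. -/
theorem stmt_17 (f : ℝ → ℝ) (d β : ℝ)
    (hd : 0 < d) (hfd : ∀ t : ℝ, d ≤ f t)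
    (hcont : Continuous f)
    (hdiff : Differentiable ℝ f)
    (hf' : ∀ t : ℝ, |deriv f t| ≤ 2 * β)
    (s : ℝ) :
    (∫ τ in (s - (4 * β)⁻¹ * f s)..s, ((f τ) ^ 3)⁻¹) ≤ 8 * (4 * β)⁻¹ * ((f s) ^ 2)⁻¹ ∧
      8 * (4 * β)⁻¹ * ((f s) ^ 2)⁻¹ ≤ 8 * (4 * β)⁻¹ * (d ^ 2)⁻¹ := by
  have hβ0 : 0 ≤ β := by
    have h1 := hf' 0
    have h2 := abs_nonneg (deriv f 0)
    linarith
  have hfs : 0 < f s := lt_of_lt_of_le hd (hfd s)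
  have hd2 : (f s ^ 2)⁻¹ ≤ (d ^ 2)⁻¹ := by
    apply inv_anti₀ (by positivity)
    exact pow_le_pow_left₀ hd.le (hfd s) 2
  rcases eq_or_lt_of_le hβ0 with hβ | hβ
  · constructor
    · simp [← hβ]
    · simp [← hβ]
  · set c := (4 * β)⁻¹ with hc_def
    have hc : 0 < c := by positivity
    have ha : s - c * f s ≤ s := by nlinarith
    have key : ∀ τ ∈ Icc (s - c * f s) s, f s / 2 ≤ f τ := by
      intro τ hτ
      have hlip : ‖f τ - f s‖ ≤ 2 * β * ‖τ - s‖ :=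
        convex_univ.norm_image_sub_le_of_norm_deriv_le
          (fun x _ => (hdiff x))
          (fun x _ => by simpa using hf' x) trivial trivial
      rw [Real.norm_eq_abs, Real.norm_eq_abs] at hlip
      have h1 : |τ - s| ≤ c * f s := by
        rw [abs_sub_comm, abs_of_nonneg (by linarith [hτ.2])]
        linarith [hτ.1]
      have h2 : f s - f τ ≤ |f τ - f s| := by
        rw [abs_sub_comm]; exact le_abs_self _
      have h3 : 2 * β * (c * f s) = f s / 2 := by
        rw [hc_def]; field_simp; ring
      nlinarith [abs_nonneg (τ - s)]
    have hbound : ∀ τ ∈ Icc (s - c * f s) s, ((f τ) ^ 3)⁻¹ ≤ ((f s / 2) ^ 3)⁻¹ := by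
      intro τ hτ
      exact inv_anti₀ (by positivity)
        (pow_le_pow_left₀ (by positivity) (key τ hτ) 3)
    have hint : IntervalIntegrable (fun τ => ((f τ) ^ 3)⁻¹) MeasureTheory.volume
        (s - c * f s) s := by
      apply Continuous.intervalIntegrable
      exact (hcont.pow 3).inv₀ (fun τ => pow_ne_zero 3 (ne_of_gt (lt_of_lt_of_le hd (hfd τ))))
    have hmono := intervalIntegral.integral_mono_on ha hint
      intervalIntegrable_const hbound
    rw [intervalIntegral.integral_const] at hmono
    constructor
    · calc (∫ τ in (s - c * f s)..s, ((f τ) ^ 3)⁻¹)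
          ≤ (s - (s - c * f s)) • ((f s / 2) ^ 3)⁻¹ := hmono
        _ = 8 * c * ((f s) ^ 2)⁻¹ := by
            rw [smul_eq_mul]; field_simp; ring
    · have h8 : (0:ℝ) ≤ 8 * c := by positivity
      exact mul_le_mul_of_nonneg_left hd2 h8
end

section
/- Let f : ℝ → ℝ be C¹ with f(t) ≥ d > 0 and |f'(t)| ≤ 2β for all t, and set β* := (4β)^{−1}, so that the maps t ↦ t − β* f(t) and t ↦ t + β* f(t) are strictly increasing bijections of ℝ. Given T ∈ ℝ, set T̂ := T − β* f(T), let T₁ be the unique real number with T₁ + β* f(T₁) = T̂, and let T₂ be the unique real number with T₂ − β* f(T₂) = T. Then T₁ ≤ T̂ ≤ T ≤ T₂, and there exists a constant C > 0 depending only on β such that ∫_{T₁}^{T₂} f(τ)^{−3} dτ ≤ C f(T)^{−2}. -/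
/-!
The map `t ↦ t ± β* f(t)` moves by `β* f`, and `f` is `2β`-Lipschitz with `2β · β* = 1/2`,
so along these steps `f` changes by at most half of itself. Hence `f(T₁) ≤ 3 f(T)`,
`f(T₂) ≤ 2 f(T)`, the interval `[T₁, T₂]` has length at most `6 β* f(T)`, and
`f ≥ f(T)/4` on it. Bounding the integrand by `64 f(T)⁻³` gives the bound `384 β* f(T)⁻²`.
-/

open Set Interval

section LipschitzSteps

variable {f : ℝ → ℝ} {L c : ℝ}

theorem add_sub_mul_le_two_mul_of_mem_Icc (hf : ∀ s t, |f s - f t| ≤ L * |s - t|)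
    {a b τ : ℝ} (hτ : τ ∈ Icc a b) : f a + f b - L * (b - a) ≤ 2 * f τ := by
  have ha := (le_abs_self _).trans (hf a τ)
  have hb := (le_abs_self _).trans (hf b τ)
  rw [abs_of_nonpos (sub_nonpos.2 hτ.1)] at ha
  rw [abs_of_nonneg (sub_nonneg.2 hτ.2)] at hb
  linarith

variable {T T₁ T₂ : ℝ}

theorem apply_le_three_mul_of_add_mul_eq_sub_mul
    (hf : ∀ s t, |f s - f t| ≤ L * |s - t|) (hLc : L * c ≤ 1 / 2) (hc : 0 ≤ c)
    (hpos : ∀ t, 0 < f t) (h₁ : T₁ + c * f T₁ = T - c * f T) :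
    f T₁ ≤ 3 * f T := by
  have hsum : 0 ≤ f T + f T₁ := add_nonneg (hpos T).le (hpos T₁).le
  have hlen : T - T₁ = c * (f T + f T₁) := by linarith
  have hstep := (le_abs_self _).trans (hf T₁ T)
  rw [abs_sub_comm, abs_of_nonneg (hlen ▸ mul_nonneg hc hsum), hlen] at hstep
  nlinarith [mul_le_mul_of_nonneg_right hLc hsum]

theorem apply_le_two_mul_of_sub_mul_eq
    (hf : ∀ s t, |f s - f t| ≤ L * |s - t|) (hLc : L * c ≤ 1 / 2) (hc : 0 ≤ c)
    (hpos : ∀ t, 0 < f t) (h₂ : T₂ - c * f T₂ = T) : f T₂ ≤ 2 * f T := by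
  have hlen : T₂ - T = c * f T₂ := by linarith
  have hstep := (le_abs_self _).trans (hf T₂ T)
  rw [abs_of_nonneg (hlen ▸ mul_nonneg hc (hpos T₂).le), hlen] at hstep
  nlinarith [mul_le_mul_of_nonneg_right hLc (hpos T₂).le]

theorem quarter_le_apply_of_mem_Icc
    (hf : ∀ s t, |f s - f t| ≤ L * |s - t|) (hLc : L * c ≤ 1 / 2) (hpos : ∀ t, 0 < f t)
    (h₁ : T₁ + c * f T₁ = T - c * f T) (h₂ : T₂ - c * f T₂ = T) {τ : ℝ}
    (hτ : τ ∈ Icc T₁ T₂) : f T / 4 ≤ f τ := by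
  rcases le_total τ T with hτT | hTτ
  · have := add_sub_mul_le_two_mul_of_mem_Icc hf ⟨hτ.1, hτT⟩
    rw [show T - T₁ = c * (f T₁ + f T) by linarith] at this
    nlinarith [mul_le_mul_of_nonneg_right hLc (add_nonneg (hpos T₁).le (hpos T).le), hpos T₁]
  · have := add_sub_mul_le_two_mul_of_mem_Icc hf ⟨hTτ, hτ.2⟩
    rw [show T₂ - T = c * f T₂ by linarith] at this
    nlinarith [mul_le_mul_of_nonneg_right hLc (hpos T₂).le, hpos T, hpos T₂]

theorem integral_inv_pow_three_le
    (hf : ∀ s t, |f s - f t| ≤ L * |s - t|) (hLc : L * c ≤ 1 / 2) (hc : 0 ≤ c)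
    (hpos : ∀ t, 0 < f t) (h₁ : T₁ + c * f T₁ = T - c * f T)
    (h₂ : T₂ - c * f T₂ = T) :
    ∫ τ in T₁..T₂, (f τ ^ 3)⁻¹ ≤ 384 * c * (f T ^ 2)⁻¹ := by
  have hfT := hpos T
  have hlen : T₂ - T₁ ≤ 6 * c * f T := by
    have := apply_le_three_mul_of_add_mul_eq_sub_mul hf hLc hc hpos h₁
    have := apply_le_two_mul_of_sub_mul_eq hf hLc hc hpos h₂
    nlinarith
  have hT₁₂ : T₁ ≤ T₂ := by nlinarith [hpos T₁, hpos T₂]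
  have hbound : ∀ τ ∈ Ι T₁ T₂, ‖(f τ ^ 3)⁻¹‖ ≤ 64 * (f T ^ 3)⁻¹ := by
    intro τ hτ
    rw [uIoc_of_le hT₁₂] at hτ
    have hquarter := quarter_le_apply_of_mem_Icc hf hLc hpos h₁ h₂ (Ioc_subset_Icc_self hτ)
    rw [Real.norm_of_nonneg (by have := hpos τ; positivity),
      show 64 * (f T ^ 3)⁻¹ = ((f T / 4) ^ 3)⁻¹ by field_simp; norm_num]
    gcongr
  calc ∫ τ in T₁..T₂, (f τ ^ 3)⁻¹
      ≤ ‖∫ τ in T₁..T₂, (f τ ^ 3)⁻¹‖ := le_abs_self _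
    _ ≤ 64 * (f T ^ 3)⁻¹ * |T₂ - T₁| :=
        intervalIntegral.norm_integral_le_of_norm_le_const hbound
    _ ≤ 64 * (f T ^ 3)⁻¹ * (6 * c * f T) := by
        rw [abs_of_nonneg (sub_nonneg.2 hT₁₂)]; gcongr
    _ = 384 * c * (f T ^ 2)⁻¹ := by field_simp; ring

end LipschitzSteps

/-- with `β* = (4β)⁻¹`, `T̂ = T − β* f(T)`, `T₁` defined by
`T₁ + β* f(T₁) = T̂` and `T₂` defined by `T₂ − β* f(T₂) = T`, one has
`T₁ ≤ T̂ ≤ T ≤ T₂` and `∫_{T₁}^{T₂} f(τ)^{−3} dτ ≤ C f(T)^{−2}` with `C` depending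
only on `β`. -/
theorem stmt_18 (β : ℝ) (hβ : 0 ≤ β) :
    ∃ C : ℝ, 0 < C ∧
      ∀ (f : ℝ → ℝ) (d : ℝ),
        0 < d → (∀ t : ℝ, d ≤ f t) →
        ContDiff ℝ 1 f →
        (∀ t : ℝ, |deriv f t| ≤ 2 * β) →
        ∀ T T₁ T₂ : ℝ,
          T₁ + (4 * β)⁻¹ * f T₁ = T - (4 * β)⁻¹ * f T →
          T₂ - (4 * β)⁻¹ * f T₂ = T →
          T₁ ≤ T - (4 * β)⁻¹ * f T ∧ T - (4 * β)⁻¹ * f T ≤ T ∧ T ≤ T₂ ∧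
            (∫ τ in T₁..T₂, ((f τ) ^ 3)⁻¹) ≤ C * ((f T) ^ 2)⁻¹ := by
  -- the `+ 1` covers `β = 0`, where `96 / β = 0` and `(4 * β)⁻¹ = 0`
  refine ⟨96 / β + 1, by positivity, fun f d hd hfd hf hderiv T T₁ T₂ h₁ h₂ => ?_⟩
  have hpos : ∀ t, 0 < f t := fun t => hd.trans_le (hfd t)
  have hc : 0 ≤ (4 * β)⁻¹ := by positivity
  have hLc : 2 * β * (4 * β)⁻¹ ≤ 1 / 2 := by
    rcases hβ.eq_or_lt with rfl | hβ₀
    · norm_num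
    · field_simp; norm_num
  have hlip : ∀ s t, |f s - f t| ≤ 2 * β * |s - t| := fun s t =>
    Convex.norm_image_sub_le_of_norm_deriv_le
      (fun x _ => (hf.differentiable one_ne_zero).differentiableAt)
      (fun x _ => hderiv x) convex_univ (mem_univ t) (mem_univ s)
  have hint := integral_inv_pow_three_le hlip hLc hc hpos h₁ h₂
  refine ⟨by nlinarith [hpos T₁], by nlinarith [hpos T], by nlinarith [hpos T₂],
    hint.trans ?_⟩
  rw [show 384 * (4 * β)⁻¹ = 96 / β by ring]
  gcongr
  linarith
end
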